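/- arXiv:2312.11223 — 10 statements merged into one kernel-verified Lean document; each statement's English description precedes it below -/
import Mathlib

section
/- Let d be a strictly positive probability distribution on a finite set Ω with |Ω| = 2. Then every 2×2 stochastic matrix M with Md = d can be written as M = (1-λ)·I + λ·P for some λ ∈ [0,1], where P is the 2×2 matrix with entries P₁₁ = 1 - d₂/d₁, P₁₂ = 1, P₂₁ = d₂/d₁, P₂₂ = 0 (assuming d₁ ≥ d₂). -/
/-!
Column sums one leave a `2 × 2` matrix `M` with only two free entries, and the first row of
`M d = d` expresses `M₀₀` through `λ := M₀₁`; the remaining entries are then those of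
`(1 - λ) I + λ P`. Nonnegativity of `M₀₁` and of `M₁₁ = 1 - λ` puts `λ` in `[0, 1]`.
-/

open Matrix

namespace Matrix

variable {K : Type*} [Field K]

theorem fin_two_apply_one_eq_one_sub_of_sum_col {M : Matrix (Fin 2) (Fin 2) K}
    (hcol : ∀ j, ∑ i, M i j = 1) (j : Fin 2) : M 1 j = 1 - M 0 j := by
  have := hcol j
  rw [Fin.sum_univ_two] at this
  linear_combination this

theorem fin_two_apply_zero_zero_of_mulVec_eq {M : Matrix (Fin 2) (Fin 2) K} {d : Fin 2 → K}
    (hd : d 0 ≠ 0) (hfix : (M *ᵥ d) 0 = d 0) : M 0 0 = 1 - M 0 1 * (d 1 / d 0) := by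
  rw [mulVec, dotProduct, Fin.sum_univ_two] at hfix
  field_simp
  linear_combination hfix

theorem fin_two_eq_smul_one_add_smul_of_sum_col {M : Matrix (Fin 2) (Fin 2) K}
    {d : Fin 2 → K} (hd : d 0 ≠ 0) (hcol : ∀ j, ∑ i, M i j = 1) (hfix : M *ᵥ d = d) :
    M = (1 - M 0 1) • (1 : Matrix (Fin 2) (Fin 2) K) +
      M 0 1 • !![1 - d 1 / d 0, 1; d 1 / d 0, 0] := by
  have h00 := fin_two_apply_zero_zero_of_mulVec_eq hd (congrFun hfix 0)
  have h1 := fin_two_apply_one_eq_one_sub_of_sum_col hcol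
  ext i j
  fin_cases i <;> fin_cases j <;> simp [h00, h1 0, h1 1]
  ring

end Matrix

theorem stmt0_general (d : Fin 2 → ℝ) (hpos : ∀ i, 0 < d i)
    (M : Matrix (Fin 2) (Fin 2) ℝ)
    (hnn : ∀ i j, 0 ≤ M i j) (hcol : ∀ j, ∑ i, M i j = 1)
    (hfix : M.mulVec d = d) :
    ∃ lam : ℝ, lam ∈ Set.Icc (0 : ℝ) 1 ∧
      M = (1 - lam) • (1 : Matrix (Fin 2) (Fin 2) ℝ) +
        lam • !![1 - d 1 / d 0, 1; d 1 / d 0, 0] := by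
  have h11 : 0 ≤ 1 - M 0 1 := Matrix.fin_two_apply_one_eq_one_sub_of_sum_col hcol 1 ▸ hnn 1 1
  exact ⟨M 0 1, ⟨hnn 0 1, by linarith⟩,
    Matrix.fin_two_eq_smul_one_add_smul_of_sum_col (hpos 0).ne' hcol hfix⟩

/-- For `|Ω| = 2`, every `d`-stochastic matrix is a `T^d`-transform,
i.e. a convex combination of the identity and the `d`-swap. -/
theorem stmt0 (d : Fin 2 → ℝ) (hpos : ∀ i, 0 < d i) (hsum : ∑ i, d i = 1)
    (hord : d 1 ≤ d 0)
    (M : Matrix (Fin 2) (Fin 2) ℝ)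
    (hnn : ∀ i j, 0 ≤ M i j) (hcol : ∀ j, ∑ i, M i j = 1)
    (hfix : M.mulVec d = d) :
    ∃ lam : ℝ, lam ∈ Set.Icc (0 : ℝ) 1 ∧
      M = (1 - lam) • (1 : Matrix (Fin 2) (Fin 2) ℝ) +
        lam • !![1 - d 1 / d 0, 1; d 1 / d 0, 0] :=
  stmt0_general d hpos M hnn hcol hfix
end

section
/- Let d be a strictly positive probability distribution on Ω = {1,...,n} with non-increasing components, and let M be a real n×n matrix. Then M is a convex combination of the identity and the d-swaps P^d(i,j) (1 ≤ i < j ≤ n) if and only if: M is stochastic, M satisfies detailed balance with respect to d, and there exists λ ∈ [0,1] such that for every 1 ≤ i ≤ n, M_{i,i} = λ + Σ_{i<j≤n} (1 - d_j/d_i) M_{i,j} + Σ_{1≤k<j≤n, k≠i, j≠i} M_{k,j}. -/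
/-!
Every `d`-swap is nonnegative (because `d` is non-increasing), has unit column sums and is in
detailed balance with `d`; all three properties pass to convex combinations with the identity.
Above the diagonal, the combination `λ • 1 + ∑_{i<j} w i j • P^d(i,j)` has entries `w`, so a
combination only depends on `λ` and its own upper triangle, and its diagonal is the formula of
the theorem. Conversely, a detailed-balanced `M` is determined by its upper triangle and its
diagonal, so the diagonal formula says `M = λ • 1 + ∑_{i<j} M i j • P^d(i,j)`, and comparing
one column sum gives `λ + ∑_{i<j} M i j = 1`.
-/

open Matrix BigOperators

/-- The `d`-swap `P^d(i,j)`: the identity except on the pair `{i,j}`, where it has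
entries `(i,i) = 1 - d j / d i`, `(i,j) = 1`, `(j,i) = d j / d i`, `(j,j) = 0`. -/
noncomputable def Pswap {n : ℕ} (d : Fin n → ℝ) (i j : Fin n) : Matrix (Fin n) (Fin n) ℝ :=
  Matrix.of fun k l =>
    if k = i ∧ l = i then 1 - d j / d i
    else if k = i ∧ l = j then 1
    else if k = j ∧ l = i then d j / d i
    else if k = j ∧ l = j then 0
    else if k = l then 1 else 0

section DetailedBalance

variable {ι R : Type*}

def detailedBalanceSubmodule [CommSemiring R] (d : ι → R) : Submodule R (Matrix ι ι R) where
  carrier := {M | ∀ k l, M k l * d l = M l k * d k}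
  add_mem' {A B} hA hB k l := by simp only [Matrix.add_apply, add_mul, hA k l, hB k l]
  zero_mem' k l := by simp
  smul_mem' c M hM k l := by simp only [Matrix.smul_apply, smul_eq_mul, mul_assoc, hM k l]

theorem one_mem_detailedBalanceSubmodule [CommSemiring R] [DecidableEq ι] (d : ι → R) :
    (1 : Matrix ι ι R) ∈ detailedBalanceSubmodule d := by
  intro k l
  by_cases h : k = l
  · rw [h]
  · rw [one_apply_ne h, one_apply_ne (Ne.symm h), zero_mul, zero_mul]

theorem eq_of_mem_detailedBalanceSubmodule [LinearOrder ι] [CommRing R] [NoZeroDivisors R]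
    {d : ι → R} (hd : ∀ i, d i ≠ 0) {A B : Matrix ι ι R}
    (hA : A ∈ detailedBalanceSubmodule d) (hB : B ∈ detailedBalanceSubmodule d)
    (hAB : ∀ k l, k ≤ l → A k l = B k l) : A = B := by
  ext k l
  rcases le_total k l with hkl | hlk
  · exact hAB k l hkl
  · refine mul_right_cancel₀ (hd l) ?_
    rw [hA k l, hB k l, hAB l k hlk]

end DetailedBalance

section Pswap

variable {n : ℕ} (d : Fin n → ℝ) {i j : Fin n}

theorem Pswap_apply_of_lt (hij : i < j) {k l : Fin n} (hkl : k < l) :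
    Pswap d i j k l = if k = i ∧ l = j then 1 else 0 := by
  simp only [Pswap, of_apply]
  split_ifs <;> first | ring1 | (exfalso; omega)

theorem Pswap_apply_self (hij : i < j) (k : Fin n) :
    Pswap d i j k k = if k = i then 1 - d j / d i else if k = j then 0 else 1 := by
  simp only [Pswap, of_apply]
  split_ifs <;> subst_vars <;> first | ring1 | (exfalso; omega)

theorem Pswap_nonneg (hd : ∀ i, 0 < d i) (hji : d j ≤ d i) (k l : Fin n) :
    0 ≤ Pswap d i j k l := by
  have hle : d j / d i ≤ 1 := (div_le_one (hd i)).mpr hji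
  have hnonneg : 0 ≤ d j / d i := div_nonneg (hd j).le (hd i).le
  simp only [Pswap, of_apply]
  split_ifs <;> linarith

theorem sum_Pswap_apply (hij : i ≠ j) (l : Fin n) : ∑ k, Pswap d i j k l = 1 := by
  have hcol : ∀ k, Pswap d i j k l =
      if l = i then (if k = i then 1 - d j / d i else 0) + (if k = j then d j / d i else 0)
      else if l = j then (if k = i then 1 else 0)
      else if k = l then 1 else 0 := by
    intro k
    simp only [Pswap, of_apply]
    split_ifs <;> simp_all
  simp only [hcol]
  split_ifs <;> simp [Finset.sum_add_distrib]

theorem Pswap_mem_detailedBalanceSubmodule (hd : ∀ i, d i ≠ 0) :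
    Pswap d i j ∈ detailedBalanceSubmodule d := by
  intro k l
  have := hd i
  simp only [Pswap, of_apply]
  split_ifs <;> grind

end Pswap

section SwapComb

variable {n : ℕ} (d : Fin n → ℝ) (lam : ℝ) (w : Fin n → Fin n → ℝ)

noncomputable def swapComb : Matrix (Fin n) (Fin n) ℝ :=
  lam • (1 : Matrix (Fin n) (Fin n) ℝ) + ∑ i, ∑ j, (if i < j then w i j else 0) • Pswap d i j

theorem swapComb_apply (k l : Fin n) :
    swapComb d lam w k l =
      lam * (1 : Matrix (Fin n) (Fin n) ℝ) k l +
        ∑ i, ∑ j, (if i < j then w i j else 0) * Pswap d i j k l := by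
  simp only [swapComb, Matrix.add_apply, Matrix.sum_apply, Matrix.smul_apply, smul_eq_mul]

theorem swapComb_apply_of_lt {k l : Fin n} (hkl : k < l) : swapComb d lam w k l = w k l := by
  have hterm : ∀ i j : Fin n, (if i < j then w i j else 0) * Pswap d i j k l
      = if i = k then (if j = l then w k l else 0) else 0 := by
    intro i j
    by_cases hij : i < j
    · rw [if_pos hij, Pswap_apply_of_lt d hij hkl]
      split_ifs <;> subst_vars <;> first | ring1 | (exfalso; omega)
    · rw [if_neg hij, zero_mul]
      split_ifs <;> subst_vars <;> first | rfl | (exfalso; omega)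
  simp [swapComb_apply, one_apply_ne hkl.ne, hterm]

theorem swapComb_apply_self (k : Fin n) :
    swapComb d lam w k k =
      lam + (∑ j, if k < j then (1 - d j / d k) * w k j else 0) +
        ∑ i, ∑ j, (if i < j ∧ i ≠ k ∧ j ≠ k then w i j else 0) := by
  have hterm : ∀ i j : Fin n, (if i < j then w i j else 0) * Pswap d i j k k
      = (if i = k then (if k < j then (1 - d j / d k) * w k j else 0) else 0) +
        (if i < j ∧ i ≠ k ∧ j ≠ k then w i j else 0) := by
    intro i j
    by_cases hij : i < j
    · rw [if_pos hij, Pswap_apply_self d hij]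
      split_ifs <;> subst_vars <;> first | ring1 | (exfalso; omega)
    · rw [if_neg hij, zero_mul]
      split_ifs <;> subst_vars <;> first | ring1 | (exfalso; omega)
  simp only [swapComb_apply, one_apply_eq, mul_one, hterm, Finset.sum_add_distrib, add_assoc]
  simp

theorem swapComb_swapComb (lam' : ℝ) :
    swapComb d lam (swapComb d lam' w) = swapComb d lam w := by
  refine congrArg (lam • (1 : Matrix (Fin n) (Fin n) ℝ) + ·) (Finset.sum_congr rfl fun i _ => Finset.sum_congr rfl fun j _ => ?_)
  split_ifs with hij
  · rw [swapComb_apply_of_lt d lam' w hij]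
  · rfl

theorem swapComb_nonneg (hd : ∀ i, 0 < d i) (hanti : Antitone d) (hlam : 0 ≤ lam)
    (hw : ∀ i j, i < j → 0 ≤ w i j) (k l : Fin n) : 0 ≤ swapComb d lam w k l := by
  rw [swapComb_apply]
  refine add_nonneg (mul_nonneg hlam (by rw [one_apply]; split_ifs <;> norm_num))
    (Finset.sum_nonneg fun i _ => Finset.sum_nonneg fun j _ => ?_)
  split_ifs with hij
  · exact mul_nonneg (hw i j hij) (Pswap_nonneg d hd (hanti hij.le) k l)
  · rw [zero_mul]

theorem sum_swapComb_apply (l : Fin n) :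
    ∑ k, swapComb d lam w k l = lam + ∑ i, ∑ j, (if i < j then w i j else 0) := by
  have hcol : ∀ i j : Fin n,
      ∑ k, (if i < j then w i j else 0) * Pswap d i j k l = if i < j then w i j else 0 := by
    intro i j
    split_ifs with hij
    · rw [← Finset.mul_sum, sum_Pswap_apply d hij.ne, mul_one]
    · simp
  have hone : ∑ k, (1 : Matrix (Fin n) (Fin n) ℝ) k l = 1 := by simp [one_apply]
  simp only [swapComb_apply, Finset.sum_add_distrib, ← Finset.mul_sum, hone, mul_one]
  rw [Finset.sum_comm]
  refine congrArg (lam + ·) (Finset.sum_congr rfl fun i _ => ?_)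
  rw [Finset.sum_comm]
  exact Finset.sum_congr rfl fun j _ => hcol i j

theorem swapComb_mem_detailedBalanceSubmodule (hd : ∀ i, d i ≠ 0) :
    swapComb d lam w ∈ detailedBalanceSubmodule d :=
  add_mem (Submodule.smul_mem _ _ (one_mem_detailedBalanceSubmodule d))
    (Submodule.sum_mem _ fun _ _ => Submodule.sum_mem _ fun _ _ =>
      Submodule.smul_mem _ _ (Pswap_mem_detailedBalanceSubmodule d hd))

end SwapComb

/-- characterization of the length-one ETO polytope. `M` is a convex
combination of the identity and the `d`-swaps `P^d(i,j)` (`i < j`) iff `M` is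
stochastic, satisfies detailed balance w.r.t. `d`, and there is `λ ∈ [0,1]` with
`M i i = λ + ∑_{i<j} (1 - d j / d i) M i j + ∑_{k<j, k≠i, j≠i} M k j` for all `i`. -/
theorem stmt3 {n : ℕ} (d : Fin n → ℝ) (hpos : ∀ i, 0 < d i) (hsum : ∑ i, d i = 1)
    (hmono : ∀ i j : Fin n, i ≤ j → d j ≤ d i)
    (M : Matrix (Fin n) (Fin n) ℝ) :
    (∃ (lam : ℝ) (w : Fin n → Fin n → ℝ),
        0 ≤ lam ∧ (∀ i j, 0 ≤ w i j) ∧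
        lam + ∑ i, ∑ j, (if i < j then w i j else 0) = 1 ∧
        M = lam • (1 : Matrix (Fin n) (Fin n) ℝ) +
          ∑ i, ∑ j, (if i < j then w i j else 0) • Pswap d i j) ↔
      ((∀ i j, 0 ≤ M i j) ∧ (∀ j, ∑ i, M i j = 1) ∧
        (∀ k l : Fin n, M k l * d l = M l k * d k) ∧
        ∃ lam ∈ Set.Icc (0 : ℝ) 1, ∀ i : Fin n,
          M i i = lam + (∑ j, if i < j then (1 - d j / d i) * M i j else 0) +
            ∑ k, ∑ j, (if k < j ∧ k ≠ i ∧ j ≠ i then M k j else 0)) := by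
  have hd : ∀ i, d i ≠ 0 := fun i => (hpos i).ne'
  constructor
  · rintro ⟨lam, w, hlam, hw, hconv, hM : M = swapComb d lam w⟩
    have hself : M = swapComb d lam M := by rw [hM, swapComb_swapComb]
    have hupper : 0 ≤ ∑ i, ∑ j, (if i < j then w i j else 0) :=
      Finset.sum_nonneg fun i _ => Finset.sum_nonneg fun j _ => by
        split_ifs
        exacts [hw i j, le_rfl]
    refine ⟨?_, fun l => ?_, ?_, lam, ⟨hlam, by linarith⟩, fun i => ?_⟩
    · rw [hM]
      exact swapComb_nonneg d lam w hpos hmono hlam fun i j _ => hw i j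
    · rw [hM, sum_swapComb_apply, hconv]
    · rw [hM]
      exact swapComb_mem_detailedBalanceSubmodule d lam w hd
    · exact (congrFun (congrFun hself i) i).trans (swapComb_apply_self d lam M i)
  · rintro ⟨hnn, hcol, hdb, lam, hlam, hdiag⟩
    have hself : M = swapComb d lam M := by
      refine eq_of_mem_detailedBalanceSubmodule hd hdb
        (swapComb_mem_detailedBalanceSubmodule d lam M hd) fun k l hkl => ?_
      rcases hkl.lt_or_eq with hlt | rfl
      · exact (swapComb_apply_of_lt d lam M hlt).symm
      · exact (hdiag k).trans (swapComb_apply_self d lam M k).symm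
    have hn : 0 < n := Nat.pos_of_ne_zero fun h => by subst h; simp at hsum
    refine ⟨lam, M, hlam.1, hnn, ?_, hself⟩
    rw [← sum_swapComb_apply d lam M ⟨0, hn⟩, ← hself, hcol]
end

section
/- Let G be the complete graph on n ≥ 2 vertices without loops and let d be uniform. The lazy random walk M = (1/2)(I + M₀), where M₀ is the simple random walk with M₀_{i,j} = 1/(n-1) for i≠j and 0 on the diagonal, is an ETO random walk (a convex combination of the identity and transpositions) if and only if n ≤ 4. -/
open Matrix BigOperators

set_option maxHeartbeats 1000000

lemma trPswap (n : ℕ) (hn : 2 ≤ n) (i j : Fin n) (hij : i ≠ j) :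
    (Pswap (fun _ => 1/(n:ℝ)) i j).trace = (n:ℝ) - 2 := by
  have hn0 : (1:ℝ)/(n:ℝ) ≠ 0 := by
    have : (0:ℝ) < n := by
      have : 0 < n := by omega
      exact_mod_cast this
    positivity
  have hdiag : ∀ k : Fin n, Pswap (fun _ => 1/(n:ℝ)) i j k k
      = 1 - ((if k = i then (1:ℝ) else 0) + (if k = j then (1:ℝ) else 0)) := by
    intro k
    simp only [Pswap, Matrix.of_apply, div_self hn0]
    rcases eq_or_ne k i with rfl | hki <;> rcases eq_or_ne k j with rfl | hkj <;>
      simp_all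
  rw [Matrix.trace]
  simp only [Matrix.diag, hdiag]
  rw [Finset.sum_sub_distrib, Finset.sum_add_distrib]
  simp [Finset.sum_ite_eq' Finset.univ i (fun _ => (1:ℝ)), Finset.card_univ]
  ring

lemma exCase (n : ℕ) (hn : 2 ≤ n) (h : n ≤ 4) :
    ∃ (lam : ℝ) (w : Fin n → Fin n → ℝ),
      0 ≤ lam ∧ (∀ i j, 0 ≤ w i j) ∧
      lam + ∑ i, ∑ j, (if i < j then w i j else 0) = 1 ∧
      (Matrix.of fun i j => if i = j then (1:ℝ)/2 else 1/(2*((n:ℝ)-1))) =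
        lam • (1 : Matrix (Fin n) (Fin n) ℝ) +
          ∑ i, ∑ j, (if i < j then w i j else 0) • Pswap (fun _ => 1/(n:ℝ)) i j := by
  interval_cases n
  · refine ⟨1/2, fun _ _ => 1/2, by norm_num, fun _ _ => by norm_num, ?_, ?_⟩
    · simp (config := { decide := true }) [Fin.sum_univ_succ]; norm_num
    · ext i j
      fin_cases i <;> fin_cases j <;>
        simp (config := { decide := true }) [Pswap, Fin.sum_univ_succ, Matrix.one_apply] <;> norm_num
  · refine ⟨1/4, fun _ _ => 1/4, by norm_num, fun _ _ => by norm_num, ?_, ?_⟩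
    · simp (config := { decide := true }) [Fin.sum_univ_succ]; norm_num
    · ext i j
      fin_cases i <;> fin_cases j <;>
        simp (config := { decide := true }) [Pswap, Fin.sum_univ_succ, Matrix.one_apply] <;> norm_num
  · refine ⟨0, fun _ _ => 1/6, by norm_num, fun _ _ => by norm_num, ?_, ?_⟩
    · simp (config := { decide := true }) [Fin.sum_univ_succ]; norm_num
    · ext i j
      fin_cases i <;> fin_cases j <;>
        simp (config := { decide := true }) [Pswap, Fin.sum_univ_succ, Matrix.one_apply] <;> norm_num

/-- the lazy random walk `M = (1/2)(I + M₀)` on the complete graph on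
`n ≥ 2` vertices (uniform `d`) is an ETO random walk, i.e. a convex combination of
the identity and the transposition-type `u`-swaps, iff `n ≤ 4`. -/
theorem stmt6 (n : ℕ) (hn : 2 ≤ n) :
    let u : Fin n → ℝ := fun _ => 1 / (n : ℝ)
    let M : Matrix (Fin n) (Fin n) ℝ :=
      Matrix.of fun i j => if i = j then 1 / 2 else 1 / (2 * ((n : ℝ) - 1))
    (∃ (lam : ℝ) (w : Fin n → Fin n → ℝ),
        0 ≤ lam ∧ (∀ i j, 0 ≤ w i j) ∧
        lam + ∑ i, ∑ j, (if i < j then w i j else 0) = 1 ∧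
        M = lam • (1 : Matrix (Fin n) (Fin n) ℝ) +
          ∑ i, ∑ j, (if i < j then w i j else 0) • Pswap u i j) ↔ n ≤ 4 := by
  intro u M
  constructor
  · rintro ⟨lam, w, hlam, -, hsum, hM⟩
    have key := congrArg Matrix.trace hM
    have htrM : M.trace = (n:ℝ) / 2 := by
      rw [Matrix.trace]
      simp only [M, Matrix.diag, Matrix.of_apply, if_pos rfl]
      rw [Finset.sum_const, Finset.card_univ, Fintype.card_fin]
      simp [mul_comm]
      ring
    have htrR : (lam • (1 : Matrix (Fin n) (Fin n) ℝ) +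
          ∑ i, ∑ j, (if i < j then w i j else 0) • Pswap u i j).trace
        = lam * n + (∑ i, ∑ j, (if i < j then w i j else 0)) * ((n:ℝ) - 2) := by
      rw [Matrix.trace_add, Matrix.trace_smul, Matrix.trace_one, Matrix.trace_sum]
      congr 1
      · simp [Fintype.card_fin]
      · rw [Finset.sum_mul]
        refine Finset.sum_congr rfl fun i _ => ?_
        rw [Matrix.trace_sum, Finset.sum_mul]
        refine Finset.sum_congr rfl fun j _ => ?_
        split_ifs with hij
        · rw [Matrix.trace_smul, trPswap n hn i j (ne_of_lt hij)]
          simp [smul_eq_mul]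
        · simp
    rw [htrM, htrR] at key
    have h4 : (n:ℝ) ≤ 4 := by nlinarith [key, hsum, hlam]
    exact_mod_cast h4
  · intro h
    exact exCase n hn h
end

section
/- Let d be a strictly positive probability distribution on Ω = {1,...,n} with non-increasing components, 1 ≤ i < j ≤ n, and λ, μ ∈ [0,1]. Then the product of two T^d-transforms on the same pair of levels is again a T^d-transform on that pair: T^d_λ(i,j) · T^d_μ(i,j) = T^d_ν(i,j) for some ν ∈ [0,1]. -/
open Matrix BigOperators

lemma Pswap_mul_self {n : ℕ} (d : Fin n → ℝ) (i j : Fin n) (hij : i ≠ j) :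
    Pswap d i j * Pswap d i j
      = (d j / d i) • (1 : Matrix (Fin n) (Fin n) ℝ) + (1 - d j / d i) • Pswap d i j := by
  ext k l
  simp only [mul_apply, Matrix.add_apply, Matrix.smul_apply, Matrix.one_apply, smul_eq_mul]
  by_cases hk : k = i
  · have hs := Fintype.sum_eq_add (f := fun m => Pswap d i j k m * Pswap d i j m l) i j hij
      (fun c ⟨hci, hcj⟩ => by
        simp [Pswap, hk, hci, hcj, Ne.symm hci, Ne.symm hcj, hij])
    rw [hs]
    simp only [Pswap, of_apply, hk]
    by_cases hl : l = i <;> by_cases hl' : l = j <;>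
      simp_all <;> (try split_ifs) <;> (try simp_all) <;> ring
  · by_cases hk' : k = j
    · have hs := Fintype.sum_eq_add (f := fun m => Pswap d i j k m * Pswap d i j m l) i j hij
        (fun c ⟨hci, hcj⟩ => by
          simp [Pswap, hk, hk', hci, hcj, Ne.symm hci, Ne.symm hcj, hij, Ne.symm hij])
      rw [hs]
      simp only [Pswap, of_apply, hk']
      by_cases hl : l = i <;> by_cases hl' : l = j <;>
        simp_all <;> (try split_ifs) <;> (try simp_all) <;> ring
    · have hs := Fintype.sum_eq_single (f := fun m => Pswap d i j k m * Pswap d i j m l) k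
        (fun c hc => by simp [Pswap, hk, hk', Ne.symm hc])
      rw [hs]
      simp only [Pswap, of_apply]
      by_cases hl : l = i <;> by_cases hl' : l = j <;>
        simp_all <;> (try split_ifs) <;> (try simp_all) <;> ring

/-- The `T^d`-transform `T^d_λ(i,j) = (1-λ)·I + λ·P^d(i,j)`. -/
noncomputable def Td {n : ℕ} (d : Fin n → ℝ) (lam : ℝ) (i j : Fin n) :
    Matrix (Fin n) (Fin n) ℝ :=
  (1 - lam) • (1 : Matrix (Fin n) (Fin n) ℝ) + lam • Pswap d i j

/-- the product of two `T^d`-transforms acting on the same pair of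
levels is again a `T^d`-transform on that pair. -/
theorem stmt7 {n : ℕ} (d : Fin n → ℝ) (hpos : ∀ i, 0 < d i) (hsum : ∑ i, d i = 1)
    (hmono : ∀ i j : Fin n, i ≤ j → d j ≤ d i)
    (i j : Fin n) (hij : i < j) (lam mu : ℝ)
    (hlam : lam ∈ Set.Icc (0 : ℝ) 1) (hmu : mu ∈ Set.Icc (0 : ℝ) 1) :
    ∃ nu ∈ Set.Icc (0 : ℝ) 1, Td d lam i j * Td d mu i j = Td d nu i j := by
  obtain ⟨hl0, hl1⟩ := hlam
  obtain ⟨hm0, hm1⟩ := hmu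
  set r : ℝ := d j / d i with hr
  have hr0 : 0 < r := div_pos (hpos j) (hpos i)
  have hr1 : r ≤ 1 := (div_le_one (hpos i)).2 (hmono i j hij.le)
  
  refine ⟨lam + mu - lam * mu * (1 + r), ⟨?_, ?_⟩, ?_⟩
  · nlinarith [mul_nonneg (mul_nonneg hl0 hm0) (sub_nonneg.2 hr1), mul_nonneg hl0 (sub_nonneg.2 hm1), mul_nonneg hm0 (sub_nonneg.2 hl1)]
  · nlinarith [mul_nonneg (mul_nonneg hl0 hm0) hr0.le, mul_nonneg (sub_nonneg.2 hl1) (sub_nonneg.2 hm1)]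
  have hps := Pswap_mul_self d i j hij.ne
  rw [← hr] at hps
  simp only [Td, add_mul, mul_add, smul_mul_smul_comm, Matrix.one_mul, Matrix.mul_one,
    smul_smul, hps]
  rw [smul_add, smul_smul, smul_smul]
  module
end

section
/- Let d be a strictly positive probability distribution on {1,...,n} with n ≥ 3 (n even suffices: the claim holds for all n ≥ 3) whose components in non-increasing order are NOT of the form (d₀,...,d₀,d₁). Then there exist probability distributions p, q on {1,...,n} such that q = Mp for some d-stochastic matrix M, but q cannot be obtained from p by any convex combination of finite products of d-swaps. Concretely: if d₁ (the largest component) satisfies d₁ ≥ d₂ + d₃ (for the second and third largest distinct-or-equal smaller components d₂ ≥ d₃ with d₂ < d₁), one may take q = (1,0,...,0) and p = (0, a, b, 0, ..., 0) with d₃/d₁ ≤ b ≤ (d₁-d₂)/d₁ and a = 1 - b; then q is d-majorized by p but any product of d-swaps applied to p has support of size at least 2. -/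
/-!
For a threshold `t`, let `supportAbove d t v` be the set of indices `i` in the support of `v`
with `t ≤ d i`. A `d`-swap `P^d(i,j)` with `d j ≤ d i` acting on a nonnegative vector either
only enlarges its support, or merely exchanges the entries `i` and `j`, which can move positive
mass only onto the index `i` of larger `d`; so the cardinality of `supportAbove d t` never
drops. A convex combination contains in its support the support of every term of positive
weight, hence no elementary thermal operation lowers that cardinality either.

On the other hand, for disjoint nonempty `S, T` with `d(T) ≤ d(S)`, the distribution `d`
conditioned on `T` `d`-majorizes `d` conditioned on `S`. With `a, b, c` the indices
`0, n - 2, n - 1`: if `d b + d c ≤ d a`, take `T = {b, c}`, `S = {a}` and `t = 0`; otherwise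
take `T = {a}`, `S = {b, c}` and `t = d a`, which exceeds `d b ≥ d c`.
-/

open Matrix BigOperators

open Finset

section

variable {n : ℕ} {d : Fin n → ℝ}

lemma Pswap_mulVec_apply {i j : Fin n} (hij : i ≠ j) (v : Fin n → ℝ) (k : Fin n) :
    (Pswap d i j *ᵥ v) k =
      if k = i then (1 - d j / d i) * v i + v j
      else if k = j then d j / d i * v i else v k := by
  simp only [mulVec, dotProduct, Pswap, of_apply]
  split_ifs with hki hkj
  · subst hki
    rw [sum_eq_add k j hij (fun l _ hl => by simp [hl.1, hl.2, Ne.symm hl.1])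
      (by simp) (by simp)]
    simp [Ne.symm hij]
  · subst hkj
    rw [sum_eq_single i (fun l _ hl => by simp [hl, hki]; tauto) (by simp)]
    simp [hki]
  · rw [sum_eq_single k (fun l _ hl => by simp [hki, hkj, Ne.symm hl]) (by simp)]
    simp [hki, hkj]

lemma Pswap_mulVec_nonneg (hd : ∀ i, 0 < d i) {i j : Fin n} (hij : i ≠ j) (hji : d j ≤ d i)
    {v : Fin n → ℝ} (hv : 0 ≤ v) : 0 ≤ Pswap d i j *ᵥ v := by
  have hr : d j / d i ≤ 1 := (div_le_one (hd i)).2 hji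
  intro k
  rw [Pi.zero_apply, Pswap_mulVec_apply hij]
  split_ifs
  · exact add_nonneg (mul_nonneg (by linarith) (hv i)) (hv j)
  · exact mul_nonneg (div_pos (hd j) (hd i)).le (hv i)
  · exact hv k

noncomputable def supportAbove (d : Fin n → ℝ) (t : ℝ) (v : Fin n → ℝ) : Finset (Fin n) :=
  {i | t ≤ d i ∧ 0 < v i}

lemma mem_supportAbove {t : ℝ} {v : Fin n → ℝ} {i : Fin n} :
    i ∈ supportAbove d t v ↔ t ≤ d i ∧ 0 < v i := by
  simp [supportAbove]

lemma supportAbove_mono {t : ℝ} {v w : Fin n → ℝ} (h : ∀ k, 0 < v k → 0 < w k) :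
    supportAbove d t v ⊆ supportAbove d t w := fun k hk => by
  rw [mem_supportAbove] at hk ⊢
  exact ⟨hk.1, h k hk.2⟩

lemma card_supportAbove_le_comp_swap {t : ℝ} {v : Fin n → ℝ} {i j : Fin n}
    (hji : d j ≤ d i) (hi : 0 < v i → d i ≤ d j) :
    #(supportAbove d t v) ≤ #(supportAbove d t (v ∘ Equiv.swap i j)) := by
  refine card_le_card_of_injOn (Equiv.swap i j) (fun k hk => ?_)
    (Equiv.swap i j).injective.injOn
  rw [mem_coe, mem_supportAbove] at hk ⊢
  refine ⟨?_, by simpa using hk.2⟩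
  rcases eq_or_ne k i with rfl | hki
  · simpa using hk.1.trans (hi hk.2)
  rcases eq_or_ne k j with rfl | hkj
  · simpa using hk.1.trans hji
  · simpa [Equiv.swap_apply_of_ne_of_ne hki hkj] using hk.1

lemma card_supportAbove_le_Pswap_mulVec (hd : ∀ i, 0 < d i) {i j : Fin n} (hij : i ≠ j)
    (hji : d j ≤ d i) {v : Fin n → ℝ} (hv : 0 ≤ v) (t : ℝ) :
    #(supportAbove d t v) ≤ #(supportAbove d t (Pswap d i j *ᵥ v)) := by
  have hr1 : d j / d i ≤ 1 := (div_le_one (hd i)).2 hji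
  by_cases hgrow : 0 < v i ∧ (d j < d i ∨ 0 < v j)
  · refine card_le_card (supportAbove_mono fun k hk => ?_)
    rw [Pswap_mulVec_apply hij]
    split_ifs with hki hkj
    · rcases hgrow with ⟨hvi, hlt | hvj⟩
      · have : d j / d i < 1 := (div_lt_one (hd i)).2 hlt
        exact add_pos_of_pos_of_nonneg (mul_pos (by linarith) hvi) (hv j)
      · exact add_pos_of_nonneg_of_pos (mul_nonneg (by linarith) hvi.le) hvj
    · exact mul_pos (div_pos (hd j) (hd i)) hgrow.1
    · exact hk
  · push Not at hgrow
    have hcases : v i = 0 ∨ d j / d i = 1 ∧ v j = 0 := by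
      rcases (hv i).eq_or_lt with h | hvi
      · exact Or.inl h.symm
      · obtain ⟨hle, hvj⟩ := hgrow hvi
        exact Or.inr ⟨(div_eq_one_iff_eq (hd i).ne').2 (le_antisymm hji hle),
          le_antisymm hvj (hv j)⟩
    have hswap : Pswap d i j *ᵥ v = v ∘ Equiv.swap i j := by
      funext k
      rw [Pswap_mulVec_apply hij, Function.comp_apply]
      rcases eq_or_ne k i with rfl | hki
      · rcases hcases with h | ⟨h, h'⟩
        · simp [h]
        · simp [h, h']
      rcases eq_or_ne k j with rfl | hkj
      · rcases hcases with h | ⟨h, -⟩ <;> simp [h, hki]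
      · simp [hki, hkj, Equiv.swap_apply_of_ne_of_ne hki hkj]
    rw [hswap]
    exact card_supportAbove_le_comp_swap hji fun hvi => (hgrow hvi).1

noncomputable def swapProduct (d : Fin n → ℝ) (L : List (Fin n × Fin n)) :
    Matrix (Fin n) (Fin n) ℝ :=
  (L.map fun pr => Pswap d pr.1 pr.2).prod

def DMajorizes (d p q : Fin n → ℝ) : Prop :=
  ∃ M : Matrix (Fin n) (Fin n) ℝ,
    (∀ i j, 0 ≤ M i j) ∧ (∀ j, ∑ i, M i j = 1) ∧ M *ᵥ d = d ∧ q = M *ᵥ p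

def IsElemThermalImage (d p q : Fin n → ℝ) : Prop :=
  ∃ (m : ℕ) (c : Fin m → ℝ) (Ls : Fin m → List (Fin n × Fin n)),
    (∀ k, 0 ≤ c k) ∧ ∑ k, c k = 1 ∧ (∀ k, ∀ pr ∈ Ls k, pr.1 < pr.2) ∧
    q = (∑ k, c k • swapProduct d (Ls k)) *ᵥ p

lemma swapProduct_mulVec_nonneg (hd : ∀ i, 0 < d i) (hmono : Antitone d)
    {L : List (Fin n × Fin n)} (hL : ∀ pr ∈ L, pr.1 < pr.2) {v : Fin n → ℝ} (hv : 0 ≤ v) :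
    0 ≤ swapProduct d L *ᵥ v := by
  induction L with
  | nil => simpa [swapProduct] using hv
  | cons pr L ih =>
    have hlt := hL pr List.mem_cons_self
    rw [swapProduct, List.map_cons, List.prod_cons, ← mulVec_mulVec]
    exact Pswap_mulVec_nonneg hd hlt.ne (hmono hlt.le)
      (ih fun pr' h => hL pr' (List.mem_cons_of_mem _ h))

lemma card_supportAbove_le_swapProduct_mulVec (hd : ∀ i, 0 < d i) (hmono : Antitone d)
    {L : List (Fin n × Fin n)} (hL : ∀ pr ∈ L, pr.1 < pr.2) {v : Fin n → ℝ} (hv : 0 ≤ v)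
    (t : ℝ) : #(supportAbove d t v) ≤ #(supportAbove d t (swapProduct d L *ᵥ v)) := by
  induction L with
  | nil => simp [swapProduct]
  | cons pr L ih =>
    have hL' : ∀ pr' ∈ L, pr'.1 < pr'.2 := fun pr' h => hL pr' (List.mem_cons_of_mem _ h)
    have hlt := hL pr List.mem_cons_self
    rw [swapProduct, List.map_cons, List.prod_cons, ← mulVec_mulVec]
    exact (ih hL').trans (card_supportAbove_le_Pswap_mulVec hd hlt.ne (hmono hlt.le)
      (swapProduct_mulVec_nonneg hd hmono hL' hv) t)

lemma supportAbove_subset_sum_smul {ι : Type*} [Fintype ι] {c : ι → ℝ} {v : ι → Fin n → ℝ}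
    (hc : 0 ≤ c) (hv : ∀ k, 0 ≤ v k) {k : ι} (hk : 0 < c k) (t : ℝ) :
    supportAbove d t (v k) ⊆ supportAbove d t (∑ k, c k • v k) :=
  supportAbove_mono fun i hi => by
    rw [Finset.sum_apply]
    calc 0 < c k • v k i := mul_pos hk hi
      _ ≤ ∑ l, (c l • v l) i :=
        single_le_sum (f := fun l => (c l • v l) i)
          (fun l _ => mul_nonneg (hc l) (hv l i)) (mem_univ k)

lemma not_isElemThermalImage_of_card_supportAbove_lt (hd : ∀ i, 0 < d i) (hmono : Antitone d)
    {p q : Fin n → ℝ} (hp : 0 ≤ p) {t : ℝ}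
    (hcard : #(supportAbove d t q) < #(supportAbove d t p)) : ¬ IsElemThermalImage d p q := by
  rintro ⟨m, c, Ls, hc, hc1, hL, rfl⟩
  obtain ⟨k, -, hk⟩ := exists_ne_zero_of_sum_ne_zero (hc1 ▸ one_ne_zero : ∑ k, c k ≠ 0)
  rw [sum_mulVec] at hcard
  simp only [smul_mulVec] at hcard
  refine lt_irrefl _ (calc
    #(supportAbove d t p) ≤ #(supportAbove d t (swapProduct d (Ls k) *ᵥ p)) :=
      card_supportAbove_le_swapProduct_mulVec hd hmono (hL k) hp t
    _ ≤ #(supportAbove d t (∑ k, c k • swapProduct d (Ls k) *ᵥ p)) :=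
      card_le_card <| supportAbove_subset_sum_smul hc
        (fun k => swapProduct_mulVec_nonneg hd hmono (hL k) hp) ((hc k).lt_of_ne' hk) t
    _ < #(supportAbove d t p) := hcard)

/-- The witness has the columns `q` on `T` and `(d - D • q) / (1 - D)` off `T`, where `D` is
the `d`-mass of `T`: then `M *ᵥ d = D • q + (d - D • q) = d`, and `M *ᵥ p = q` since `p` lives
on `T`. -/
lemma dMajorizes_of_support_subset (hsum : ∑ i, d i = 1) {T : Finset (Fin n)}
    {p q : Fin n → ℝ}
    (hpT : ∀ l ∉ T, p l = 0) (hp : ∑ i, p i = 1) (hq : 0 ≤ q) (hq1 : ∑ i, q i = 1)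
    (hT : ∑ l ∈ T, d l < 1) (hdq : ∀ i, (∑ l ∈ T, d l) * q i ≤ d i) : DMajorizes d p q := by
  have hD : 1 - ∑ l ∈ T, d l ≠ 0 := by linarith
  have hsplit (f : Fin n → ℝ) : ∑ l ∈ T, f l + ∑ l with l ∉ T, f l = ∑ l, f l := by
    rw [← sum_filter_add_sum_filter_not univ (· ∈ T), filter_mem_eq_inter, univ_inter]
  have hdT : ∑ l with l ∉ T, d l = 1 - ∑ l ∈ T, d l := by linarith [hsplit d]
  have hpT0 : ∑ l with l ∉ T, p l = 0 := sum_eq_zero fun l hl => hpT l (mem_filter.1 hl).2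
  have hpT1 : ∑ l ∈ T, p l = 1 := by linarith [hsplit p]
  refine ⟨of fun i l =>
    if l ∈ T then q i else (d i - (∑ l ∈ T, d l) * q i) / (1 - ∑ l ∈ T, d l), ?_, ?_, ?_, ?_⟩
  · intro i l
    simp only [of_apply]
    split_ifs
    · exact hq i
    · exact div_nonneg (by linarith [hdq i]) (by linarith)
  · intro l
    simp only [of_apply]
    split_ifs
    · exact hq1
    · rw [← sum_div, sum_sub_distrib, ← mul_sum, hsum, hq1, mul_one, div_self hD]
  · funext i
    simp only [mulVec, dotProduct, of_apply, ite_mul, sum_ite, filter_mem_eq_inter, univ_inter,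
      ← mul_sum, hdT, div_mul_cancel₀ _ hD]
    ring
  · funext i
    simp only [mulVec, dotProduct, of_apply, ite_mul, sum_ite, filter_mem_eq_inter, univ_inter,
      ← mul_sum, hpT0, hpT1]
    ring

noncomputable def condDist (d : Fin n → ℝ) (S : Finset (Fin n)) : Fin n → ℝ :=
  fun i => if i ∈ S then d i / ∑ l ∈ S, d l else 0

lemma condDist_nonneg (hd : ∀ i, 0 < d i) (S : Finset (Fin n)) : 0 ≤ condDist d S := by
  intro i
  unfold condDist
  split_ifs
  · exact div_nonneg (hd i).le (sum_nonneg fun l _ => (hd l).le)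
  · exact le_rfl

lemma sum_condDist (hd : ∀ i, 0 < d i) {S : Finset (Fin n)} (hS : S.Nonempty) :
    ∑ i, condDist d S i = 1 := by
  unfold condDist
  rw [sum_ite_mem, univ_inter, ← sum_div, div_self (sum_pos (fun l _ => hd l) hS).ne']

lemma supportAbove_condDist (hd : ∀ i, 0 < d i) (S : Finset (Fin n)) (t : ℝ) :
    supportAbove d t (condDist d S) = {i ∈ S | t ≤ d i} := by
  ext i
  by_cases hi : i ∈ S
  · have := div_pos (hd i) (sum_pos (fun l _ => hd l) ⟨i, hi⟩)
    simp [mem_supportAbove, condDist, hi, this]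
  · simp [mem_supportAbove, condDist, hi]

lemma dMajorizes_condDist (hd : ∀ i, 0 < d i) (hsum : ∑ i, d i = 1) {S T : Finset (Fin n)}
    (hST : Disjoint S T) (hS : S.Nonempty) (hT : T.Nonempty)
    (hTS : ∑ l ∈ T, d l ≤ ∑ l ∈ S, d l) : DMajorizes d (condDist d T) (condDist d S) := by
  have hSpos : 0 < ∑ l ∈ S, d l := sum_pos (fun l _ => hd l) hS
  have hST1 : ∑ l ∈ S, d l + ∑ l ∈ T, d l ≤ 1 := by
    rw [← sum_union hST, ← hsum]
    exact sum_le_univ_sum_of_nonneg fun l => (hd l).le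
  refine dMajorizes_of_support_subset hsum (fun l hl => if_neg hl) (sum_condDist hd hT)
    (condDist_nonneg hd S) (sum_condDist hd hS) (by linarith) fun i => ?_
  unfold condDist
  split_ifs
  · rw [mul_div_assoc']
    exact div_le_of_le_mul₀ hSpos.le (hd i).le (by nlinarith [hd i])
  · rw [mul_zero]
    exact (hd i).le

lemma exists_dMajorizes_not_isElemThermalImage (hd : ∀ i, 0 < d i) (hsum : ∑ i, d i = 1)
    (hmono : Antitone d) {S T : Finset (Fin n)} (hST : Disjoint S T) (hS : S.Nonempty)
    (hT : T.Nonempty) (hTS : ∑ l ∈ T, d l ≤ ∑ l ∈ S, d l) (t : ℝ)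
    (hcard : #{i ∈ S | t ≤ d i} < #{i ∈ T | t ≤ d i}) :
    ∃ p q : Fin n → ℝ, 0 ≤ p ∧ ∑ i, p i = 1 ∧ 0 ≤ q ∧ ∑ i, q i = 1 ∧
      DMajorizes d p q ∧ ¬ IsElemThermalImage d p q := by
  refine ⟨condDist d T, condDist d S, condDist_nonneg hd T, sum_condDist hd hT,
    condDist_nonneg hd S, sum_condDist hd hS, dMajorizes_condDist hd hsum hST hS hT hTS,
    not_isElemThermalImage_of_card_supportAbove_lt hd hmono (condDist_nonneg hd T) (t := t) ?_⟩
  rwa [supportAbove_condDist hd, supportAbove_condDist hd]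

end

/-- if `d` is strictly positive, non-increasing, and not of the form
`(d₀,…,d₀,d₁)` (i.e. `d` strictly decreases somewhere among its first `n-1`
components), then there are probability distributions `p, q` with `q = M p` for
some `d`-stochastic `M`, while `q` cannot be obtained from `p` by any convex
combination of finite products of `d`-swaps. -/
theorem stmt9 (n : ℕ) (hn : 3 ≤ n) (d : Fin n → ℝ)
    (hpos : ∀ i, 0 < d i) (hsum : ∑ i, d i = 1)
    (hmono : ∀ i j : Fin n, i ≤ j → d j ≤ d i)
    (hne : d ⟨n - 2, by omega⟩ < d ⟨0, by omega⟩) :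
    ∃ p q : Fin n → ℝ,
      (∀ i, 0 ≤ p i) ∧ ∑ i, p i = 1 ∧ (∀ i, 0 ≤ q i) ∧ ∑ i, q i = 1 ∧
      (∃ M : Matrix (Fin n) (Fin n) ℝ,
        (∀ i j, 0 ≤ M i j) ∧ (∀ j, ∑ i, M i j = 1) ∧ M.mulVec d = d ∧
        q = M.mulVec p) ∧
      ¬ ∃ (m : ℕ) (c : Fin m → ℝ) (Ls : Fin m → List (Fin n × Fin n)),
          (∀ k, 0 ≤ c k) ∧ (∑ k, c k = 1) ∧
          (∀ k, ∀ pr ∈ Ls k, pr.1 < pr.2) ∧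
          q = (∑ k, c k • ((Ls k).map fun pr => Pswap d pr.1 pr.2).prod).mulVec p := by
  set a : Fin n := ⟨0, by omega⟩
  set b : Fin n := ⟨n - 2, by omega⟩
  set c : Fin n := ⟨n - 1, by omega⟩
  have hab : a ≠ b := by simp [a, b, Fin.ext_iff]; omega
  have hac : a ≠ c := by simp [a, c, Fin.ext_iff]; omega
  have hbc : b ≠ c := by simp [b, c, Fin.ext_iff]; omega
  have hcb : d c ≤ d b := hmono b c (by simp [b, c, Fin.le_def]; omega)
  have hdisj : Disjoint ({a} : Finset (Fin n)) {b, c} := by simp [hab, hac]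
  rcases le_or_gt (d b + d c) (d a) with hsmall | hlarge
  · exact exists_dMajorizes_not_isElemThermalImage hpos hsum hmono hdisj (by simp) (by simp)
      (by simpa [sum_pair hbc] using hsmall) 0 (by simp [(hpos _).le, card_pair hbc])
  · exact exists_dMajorizes_not_isElemThermalImage hpos hsum hmono hdisj.symm (by simp) (by simp)
      (by simpa [sum_pair hbc] using hlarge.le) (d a)
      (by simp [filter_singleton, filter_insert, hne.not_ge, (hcb.trans_lt hne).not_ge])
end

section
/- Let d be a strictly positive probability distribution on a finite set Ω and let M be a matrix that is a finite product of T^d-transforms (matrices of the form (1-λ)I + λP^d(i,j)). If p is a probability distribution with full support (all p_i > 0), then the size of the support of Mp is at least the size of the support of p; more generally, for any probability distribution p, |supp(Mp)| ≥ |supp(p)|. -/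
/-!
A `T^d`-transform on the pair `(a, b)` with `d b ≤ d a` fixes every other coordinate, preserves
`q a + q b`, and maps nonnegative vectors to nonnegative ones. If `q a` and `q b` are both
positive, so are both new coordinates: the only way to lose one is `λ = 1`, where the new value at
`b` is `(d b / d a) q a > 0`. Hence the number of positive coordinates among `a, b` cannot drop,
and this monotonicity is stable under products.
-/

open Matrix BigOperators

section TTransform

variable {n : ℕ} {d : Fin n → ℝ} {a b : Fin n} (q : Fin n → ℝ)

lemma Pswap_mulVec_apply_left (hab : a ≠ b) :
    (Pswap d a b *ᵥ q) a = (1 - d b / d a) * q a + q b := by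
  rw [mulVec, dotProduct, Fintype.sum_eq_add a b hab]
  · simp [Pswap, Ne.symm hab]
  · rintro x ⟨hxa, hxb⟩
    simp [Pswap, hxa, hxb, Ne.symm hxa]

lemma Pswap_mulVec_apply_right (hab : a ≠ b) :
    (Pswap d a b *ᵥ q) b = d b / d a * q a := by
  rw [mulVec, dotProduct, Fintype.sum_eq_single a]
  · simp [Pswap, hab, Ne.symm hab]
  · intro x hxa
    by_cases hxb : x = b
    · simp [Pswap, hxb, Ne.symm hab]
    · simp [Pswap, hxa, hxb, Ne.symm hab, Ne.symm hxb]

lemma Pswap_mulVec_apply_of_ne {k : Fin n} (hka : k ≠ a) (hkb : k ≠ b) :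
    (Pswap d a b *ᵥ q) k = q k := by
  rw [mulVec, dotProduct, Fintype.sum_eq_single k]
  · simp [Pswap, hka, hkb]
  · intro x hxk
    simp [Pswap, hka, hkb, Ne.symm hxk]

variable (lam : ℝ)

lemma tTransform_mulVec_apply (k : Fin n) :
    (((1 - lam) • (1 : Matrix (Fin n) (Fin n) ℝ) + lam • Pswap d a b) *ᵥ q) k =
      (1 - lam) * q k + lam * (Pswap d a b *ᵥ q) k := by
  simp only [add_mulVec, smul_mulVec, one_mulVec, Pi.add_apply, Pi.smul_apply, smul_eq_mul]

lemma tTransform_mulVec_apply_left (hab : a ≠ b) :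
    (((1 - lam) • (1 : Matrix (Fin n) (Fin n) ℝ) + lam • Pswap d a b) *ᵥ q) a =
      (1 - lam * (d b / d a)) * q a + lam * q b := by
  rw [tTransform_mulVec_apply, Pswap_mulVec_apply_left q hab]
  ring

lemma tTransform_mulVec_apply_right (hab : a ≠ b) :
    (((1 - lam) • (1 : Matrix (Fin n) (Fin n) ℝ) + lam • Pswap d a b) *ᵥ q) b =
      (1 - lam) * q b + lam * (d b / d a) * q a := by
  rw [tTransform_mulVec_apply, Pswap_mulVec_apply_right q hab]
  ring

lemma tTransform_mulVec_apply_of_ne {k : Fin n} (hka : k ≠ a) (hkb : k ≠ b) :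
    (((1 - lam) • (1 : Matrix (Fin n) (Fin n) ℝ) + lam • Pswap d a b) *ᵥ q) k = q k := by
  rw [tTransform_mulVec_apply, Pswap_mulVec_apply_of_ne q hka hkb]
  ring

end TTransform

section SupportCard

variable {ι : Type*} [Fintype ι]

noncomputable def supportCard (q : ι → ℝ) : ℕ := (Finset.univ.filter fun i => 0 < q i).card

lemma supportCard_le_of_eq_off_pair [DecidableEq ι] {q q' : ι → ℝ} {a b : ι} (hab : a ≠ b)
    (hq : 0 ≤ q) (hoff : ∀ k, k ≠ a → k ≠ b → q' k = q k)
    (hsum : q' a + q' b = q a + q b) (hboth : 0 < q a → 0 < q b → 0 < q' a ∧ 0 < q' b) :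
    supportCard q ≤ supportCard q' := by
  -- Supports need not be nested (all mass may move from `a` to `b`): only counts are compared.
  have hone : 0 < q a ∨ 0 < q b → 0 < q' a ∨ 0 < q' b := by
    contrapose!
    rintro ⟨ha, hb⟩
    constructor <;> linarith [show 0 ≤ q a from hq a, show 0 ≤ q b from hq b]
  simp only [supportCard, Finset.card_filter]
  rw [← Finset.sum_add_sum_compl {a, b}, ← Finset.sum_add_sum_compl {a, b} (fun i => _),
    Finset.sum_pair hab, Finset.sum_pair hab]
  have hrest : ∀ k ∈ ({a, b} : Finset ι)ᶜ,
      (if 0 < q k then 1 else 0) = (if 0 < q' k then 1 else 0) := by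
    intro k hk
    simp only [Finset.mem_compl, Finset.mem_insert, Finset.mem_singleton, not_or] at hk
    rw [hoff k hk.1 hk.2]
  rw [Finset.sum_congr rfl hrest]
  gcongr ?_ + _
  split_ifs <;> simp_all

def SupportCardMono (T : Matrix ι ι ℝ) : Prop :=
  ∀ q : ι → ℝ, 0 ≤ q → 0 ≤ T *ᵥ q ∧ supportCard q ≤ supportCard (T *ᵥ q)

lemma SupportCardMono.mul {S T : Matrix ι ι ℝ} (hS : SupportCardMono S)
    (hT : SupportCardMono T) : SupportCardMono (S * T) := by
  intro q hq
  obtain ⟨hTq, hcardT⟩ := hT q hq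
  obtain ⟨hSTq, hcardS⟩ := hS (T *ᵥ q) hTq
  rw [← mulVec_mulVec]
  exact ⟨hSTq, hcardT.trans hcardS⟩

lemma supportCardMono_list_prod [DecidableEq ι] (L : List (Matrix ι ι ℝ))
    (hL : ∀ T ∈ L, SupportCardMono T) : SupportCardMono L.prod :=
  List.prod_induction _ (fun _ _ => SupportCardMono.mul)
    (fun q hq => ⟨by rwa [one_mulVec], by rw [one_mulVec]⟩) hL

end SupportCard

def IsTdTransform {n : ℕ} (d : Fin n → ℝ) (T : Matrix (Fin n) (Fin n) ℝ) : Prop :=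
  ∃ (a b : Fin n) (lam : ℝ), a ≠ b ∧ d b ≤ d a ∧ lam ∈ Set.Icc (0 : ℝ) 1 ∧
    T = (1 - lam) • (1 : Matrix (Fin n) (Fin n) ℝ) + lam • Pswap d a b

lemma IsTdTransform.supportCardMono {n : ℕ} {d : Fin n → ℝ} (hpos : ∀ i, 0 < d i)
    {T : Matrix (Fin n) (Fin n) ℝ} (hT : IsTdTransform d T) : SupportCardMono T := by
  obtain ⟨a, b, lam, hab, hba, ⟨hlam0, hlam1⟩, rfl⟩ := hT
  have hr0 : 0 < d b / d a := div_pos (hpos b) (hpos a)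
  have hr1 : d b / d a ≤ 1 := (div_le_one (hpos a)).2 hba
  have hlr : 0 ≤ 1 - lam * (d b / d a) := sub_nonneg.2 (mul_le_one₀ hlam1 hr0.le hr1)
  intro q hq
  have hqa : 0 ≤ q a := hq a
  have hqb : 0 ≤ q b := hq b
  have hleft := tTransform_mulVec_apply_left (d := d) q lam hab
  have hright := tTransform_mulVec_apply_right (d := d) q lam hab
  refine ⟨fun k => ?_, supportCard_le_of_eq_off_pair hab hq
    (fun k hka hkb => tTransform_mulVec_apply_of_ne q lam hka hkb) ?_ fun ha hb => ⟨?_, ?_⟩⟩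
  · rcases eq_or_ne k a with rfl | hka
    · rw [hleft]
      exact add_nonneg (mul_nonneg hlr hqa) (mul_nonneg hlam0 hqb)
    rcases eq_or_ne k b with rfl | hkb
    · rw [hright]
      exact add_nonneg (mul_nonneg (sub_nonneg.2 hlam1) hqb) (by positivity)
    · rw [tTransform_mulVec_apply_of_ne q lam hka hkb]
      exact hq k
  · rw [hleft, hright]
    ring
  · rw [hleft]
    rcases hlam0.eq_or_lt with rfl | hlam
    · simpa using ha
    · exact add_pos_of_nonneg_of_pos (mul_nonneg hlr hqa) (mul_pos hlam hb)
  · rw [hright]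
    rcases hlam1.lt_or_eq with hlam | rfl
    · exact add_pos_of_pos_of_nonneg (mul_pos (sub_pos.2 hlam) hb) (by positivity)
    · simpa using mul_pos hr0 ha

theorem stmt10_general {n : ℕ} (d : Fin n → ℝ) (hpos : ∀ i, 0 < d i)
    (M : Matrix (Fin n) (Fin n) ℝ)
    (hM : ∃ L : List (Matrix (Fin n) (Fin n) ℝ),
        (∀ T ∈ L, ∃ (a b : Fin n) (lam : ℝ), a ≠ b ∧ d b ≤ d a ∧
          lam ∈ Set.Icc (0 : ℝ) 1 ∧
          T = (1 - lam) • (1 : Matrix (Fin n) (Fin n) ℝ) + lam • Pswap d a b) ∧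
        M = L.prod)
    (p : Fin n → ℝ) (hp0 : ∀ i, 0 ≤ p i) :
    (Finset.univ.filter fun i => 0 < p i).card ≤
      (Finset.univ.filter fun i => 0 < M.mulVec p i).card := by
  obtain ⟨L, hL, rfl⟩ := hM
  have hprod : SupportCardMono L.prod :=
    supportCardMono_list_prod L fun T hT => IsTdTransform.supportCardMono hpos (hL T hT)
  exact (hprod p hp0).2

/-- monotonicity of support size under finite products of
`T^d`-transforms (for a general strictly positive probability distribution `d`,
the `d`-swaps are taken on pairs `a ≠ b` with `d b ≤ d a`): for every probability
distribution `p`, `|supp(M p)| ≥ |supp(p)|`. -/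
theorem stmt10 {n : ℕ} (d : Fin n → ℝ) (hpos : ∀ i, 0 < d i) (hsum : ∑ i, d i = 1)
    (M : Matrix (Fin n) (Fin n) ℝ)
    (hM : ∃ L : List (Matrix (Fin n) (Fin n) ℝ),
        (∀ T ∈ L, ∃ (a b : Fin n) (lam : ℝ), a ≠ b ∧ d b ≤ d a ∧
          lam ∈ Set.Icc (0 : ℝ) 1 ∧
          T = (1 - lam) • (1 : Matrix (Fin n) (Fin n) ℝ) + lam • Pswap d a b) ∧
        M = L.prod)
    (p : Fin n → ℝ) (hp0 : ∀ i, 0 ≤ p i) (hp1 : ∑ i, p i = 1) :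
    (Finset.univ.filter fun i => 0 < p i).card ≤
      (Finset.univ.filter fun i => 0 < M.mulVec p i).card :=
  stmt10_general d hpos M hM p hp0
end

section
/- Let d be a strictly positive probability distribution on {1,...,n} with n ≥ 4 and non-increasing components with d_n < d_{n-1}, and let M₀ be the (n-1)×(n-1) doubly stochastic matrix with (M₀)_{i,j} = 1/(n-2) for i ≠ j and 0 on the diagonal. Define M = M₀ ⊕ 1 (acting as the identity on the last coordinate). If M = Π_{k=1}^{N} T^d_{λ_k}(i_k, j_k) is a product of T^d-transforms, then every factor with j_k = n and λ_k > 0 leads to a contradiction; i.e., any such product decomposition uses only T^d-transforms on the first n-1 coordinates. Consequently M is in the WETO polytope of d if and only if M₀ is a product of T-transforms for the uniform distribution on n-1 points. -/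
open Matrix BigOperators

/-!
Call a matrix row-zero-incomparable if no row's zero set is contained in another's. If
`A = T^d_λ(i,j) B` with `B ≥ 0`, `λ > 0` and `λ d_j / d_i < 1`, then a zero of `A` in row `i`
forces zeros of `B` in rows `i` and `j` of that column, hence a zero of `A` in row `j`. So when
a row-zero-incomparable `A` is a product of stochastic `T^d`-transforms, its first factor is the
identity (`λ = 0`) or a transposition (`λ = 1`, `d_i = d_j`); peeling it off preserves the
property, so every factor is of this kind and the product is a permutation matrix. A factor on a
pair `(i, n)` is never a transposition since `d_n < d_i`, so it has weight `0`. Finally `M` and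
`M₀` are row-zero-incomparable with entries `1/(n-2) ∉ {0, 1}`: neither is such a product, and
both sides of the equivalence are false.
-/

section TdTransform

variable {n : ℕ} (d : Fin n → ℝ) (lam : ℝ) {i j : Fin n}

lemma Td_apply (k l : Fin n) :
    Td d lam i j k l = (1 - lam) * (1 : Matrix (Fin n) (Fin n) ℝ) k l + lam * Pswap d i j k l :=
  rfl

lemma Td_zero (i j : Fin n) : Td d 0 i j = 1 := by
  simp [Td]

lemma Td_one_of_div_eq_one (hij : i ≠ j) (hr : d j / d i = 1) :
    Td d 1 i j = (Equiv.swap i j).permMatrix ℝ := by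
  ext k l
  simp only [Td_apply, Pswap, hr, PEquiv.toMatrix_apply, Equiv.toPEquiv_apply, Option.mem_def,
    Option.some.injEq, Equiv.swap_apply_def, Matrix.of_apply, Matrix.one_apply]
  split_ifs <;> grind

lemma Td_nonneg (hlam : lam ∈ Set.Icc (0 : ℝ) 1) (hr : d j / d i ∈ Set.Icc (0 : ℝ) 1)
    (k l : Fin n) : 0 ≤ Td d lam i j k l := by
  obtain ⟨hlam0, hlam1⟩ := hlam
  obtain ⟨hr0, hr1⟩ := hr
  have hP : 0 ≤ Pswap d i j k l := by
    simp only [Pswap, Matrix.of_apply]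
    split_ifs <;> linarith
  rw [Td_apply, Matrix.one_apply]
  split_ifs <;> positivity

variable (B : Matrix (Fin n) (Fin n) ℝ) (l : Fin n)

lemma Td_mul_apply_left (hij : i ≠ j) :
    (Td d lam i j * B) i l = (1 - lam * (d j / d i)) * B i l + lam * B j l := by
  rw [Matrix.mul_apply, Fintype.sum_eq_add i j hij]
  · simp only [Td_apply, Pswap, Matrix.of_apply, Matrix.one_apply, hij, hij.symm, and_self,
      and_true, and_false, if_true, if_false]
    ring
  · rintro x ⟨hxi, hxj⟩
    simp [Td_apply, Pswap, hij, hxi, hxj, Ne.symm hxi]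

lemma Td_mul_apply_right (hij : i ≠ j) :
    (Td d lam i j * B) j l = lam * (d j / d i) * B i l + (1 - lam) * B j l := by
  rw [Matrix.mul_apply, Fintype.sum_eq_add i j hij]
  · simp [Td_apply, Pswap, hij, hij.symm]
  · rintro x ⟨hxi, hxj⟩
    simp [Td_apply, Pswap, hij.symm, hxi, hxj, Ne.symm hxj]

end TdTransform

def TdAdmissible {n : ℕ} (d : Fin n → ℝ) (t : ℝ × Fin n × Fin n) : Prop :=
  t.2.1 ≠ t.2.2 ∧ t.1 ∈ Set.Icc (0 : ℝ) 1 ∧ d t.2.2 / d t.2.1 ∈ Set.Icc (0 : ℝ) 1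

noncomputable def tdProd {n : ℕ} (d : Fin n → ℝ) (L : List (ℝ × Fin n × Fin n)) :
    Matrix (Fin n) (Fin n) ℝ :=
  (L.map fun t => Td d t.1 t.2.1 t.2.2).prod

def RowZeroSetsIncomparable {m : Type*} {n : Type*} (A : Matrix m n ℝ) : Prop :=
  ∀ i j, i ≠ j → ∃ l, A i l = 0 ∧ A j l ≠ 0

lemma RowZeroSetsIncomparable.submatrix {m n : Type*} {A : Matrix m n ℝ}
    (hA : RowZeroSetsIncomparable A) {f : m → m} (hf : Function.Injective f) :
    RowZeroSetsIncomparable (A.submatrix f id) :=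
  fun i j hij => hA (f i) (f j) (hf.ne hij)

lemma tdAdmissible_of_antitone {n : ℕ} {d : Fin n → ℝ} (hpos : ∀ i, 0 < d i)
    (hd : Antitone d) {t : ℝ × Fin n × Fin n} (hij : t.2.1 < t.2.2)
    (hlam : t.1 ∈ Set.Icc (0 : ℝ) 1) :
    TdAdmissible d t :=
  ⟨hij.ne, hlam, div_nonneg (hpos _).le (hpos _).le, (div_le_one (hpos _)).2 (hd hij.le)⟩

lemma tdAdmissible_const {n : ℕ} {c : ℝ} (hc : c ≠ 0) {t : ℝ × Fin n × Fin n}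
    (hij : t.2.1 ≠ t.2.2) (hlam : t.1 ∈ Set.Icc (0 : ℝ) 1) : TdAdmissible (fun _ => c) t :=
  ⟨hij, hlam, by simp [div_self hc]⟩

section Products

variable {n : ℕ} (d : Fin n → ℝ)

lemma tdProd_cons (t : ℝ × Fin n × Fin n) (L : List (ℝ × Fin n × Fin n)) :
    tdProd d (t :: L) = Td d t.1 t.2.1 t.2.2 * tdProd d L := by
  simp [tdProd]

lemma tdProd_nonneg {L : List (ℝ × Fin n × Fin n)} (hL : ∀ t ∈ L, TdAdmissible d t)
    (k l : Fin n) : 0 ≤ tdProd d L k l := by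
  refine List.prod_induction (fun A : Matrix (Fin n) (Fin n) ℝ => ∀ k l, 0 ≤ A k l)
    (fun A B hA hB k l => by
      rw [Matrix.mul_apply]; exact Finset.sum_nonneg fun x _ => mul_nonneg (hA k x) (hB x l))
    (fun k l => ?_) ?_ k l
  · rw [Matrix.one_apply]; split_ifs <;> norm_num
  · simp only [List.mem_map]
    rintro _ ⟨t, ht, rfl⟩
    exact Td_nonneg d t.1 (hL t ht).2.1 (hL t ht).2.2

lemma tdProd_eq_permMatrix {L : List (ℝ × Fin n × Fin n)}
    (hL : ∀ t ∈ L, t.2.1 ≠ t.2.2 ∧ (t.1 = 0 ∨ t.1 = 1 ∧ d t.2.2 / d t.2.1 = 1)) :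
    ∃ σ : Equiv.Perm (Fin n), tdProd d L = σ.permMatrix ℝ := by
  refine List.prod_induction (fun A => ∃ σ : Equiv.Perm (Fin n), A = σ.permMatrix ℝ)
    (fun A B ⟨σ, hσ⟩ ⟨τ, hτ⟩ => ⟨τ * σ, by rw [hσ, hτ, Matrix.permMatrix_mul]⟩)
    ⟨1, (Matrix.permMatrix_one).symm⟩ ?_
  simp only [List.mem_map]
  rintro _ ⟨⟨lam, i, j⟩, ht, rfl⟩
  obtain ⟨hij, rfl | ⟨rfl, hr⟩⟩ := hL _ ht
  · exact ⟨1, by rw [Td_zero, Matrix.permMatrix_one]⟩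
  · exact ⟨Equiv.swap i j, Td_one_of_div_eq_one d hij hr⟩

lemma Td_mul_apply_right_eq_zero {lam : ℝ} {i j : Fin n} (hij : i ≠ j)
    {B : Matrix (Fin n) (Fin n) ℝ} (hB : ∀ k l, 0 ≤ B k l) (hlam : 0 < lam)
    (hlr : lam * (d j / d i) < 1) {l : Fin n} (h : (Td d lam i j * B) i l = 0) :
    (Td d lam i j * B) j l = 0 := by
  rw [Td_mul_apply_left d lam B l hij] at h
  have hBi : B i l = 0 := by nlinarith [hB i l, hB j l]
  have hBj : B j l = 0 := by nlinarith [hB i l, hB j l]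
  rw [Td_mul_apply_right d lam B l hij, hBi, hBj]
  ring

theorem trivial_or_swap_of_rowZeroSetsIncomparable {L : List (ℝ × Fin n × Fin n)}
    (hL : ∀ t ∈ L, TdAdmissible d t) {A : Matrix (Fin n) (Fin n) ℝ}
    (hA : RowZeroSetsIncomparable A) (hAL : A = tdProd d L) :
    ∀ t ∈ L, t.1 = 0 ∨ t.1 = 1 ∧ d t.2.2 / d t.2.1 = 1 := by
  induction L generalizing A with
  | nil => simp
  | cons t L ih =>
    obtain ⟨lam, i, j⟩ := t
    obtain ⟨hij, ⟨hlam0, hlam1⟩, ⟨hr0, hr1⟩⟩ := hL _ List.mem_cons_self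
    have hL' : ∀ t ∈ L, TdAdmissible d t := fun t ht => hL t (List.mem_cons_of_mem _ ht)
    rw [tdProd_cons] at hAL
    have hhead : lam = 0 ∨ lam = 1 ∧ d j / d i = 1 := by
      by_contra! hne
      have hlr : lam * (d j / d i) < 1 := by
        by_contra! h
        exact hne.2 (by nlinarith) (by nlinarith)
      obtain ⟨l, hil, hjl⟩ := hA i j hij
      rw [hAL] at hil hjl
      exact hjl (Td_mul_apply_right_eq_zero d hij (tdProd_nonneg d hL')
        (lt_of_le_of_ne hlam0 (Ne.symm hne.1)) hlr hil)
    have htail : RowZeroSetsIncomparable (tdProd d L) := by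
      rcases hhead with rfl | ⟨rfl, hr⟩
      · simpa [Td_zero, hAL] using hA
      · rw [Td_one_of_div_eq_one d hij hr, PEquiv.toMatrix_toPEquiv_mul] at hAL
        have : tdProd d L = A.submatrix (Equiv.swap i j) id := by
          rw [hAL]; ext k l; simp
        rw [this]
        exact hA.submatrix (Equiv.swap i j).injective
    rintro t (_ | ⟨_, ht⟩)
    · exact hhead
    · exact ih hL' htail rfl t ht

theorem ne_tdProd_of_rowZeroSetsIncomparable {A : Matrix (Fin n) (Fin n) ℝ}
    (hA : RowZeroSetsIncomparable A) {k l : Fin n} (h0 : A k l ≠ 0) (h1 : A k l ≠ 1)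
    {L : List (ℝ × Fin n × Fin n)} (hL : ∀ t ∈ L, TdAdmissible d t) : A ≠ tdProd d L := by
  intro hAL
  have hfac := trivial_or_swap_of_rowZeroSetsIncomparable d hL hA hAL
  obtain ⟨σ, hσ⟩ := tdProd_eq_permMatrix d fun t ht => ⟨(hL t ht).1, hfac t ht⟩
  have hkl := congrFun (congrFun (hAL.trans hσ) k) l
  simp only [PEquiv.toMatrix_apply] at hkl
  split_ifs at hkl <;> simp_all

end Products

lemma rowZeroSetsIncomparable_offDiag {m : Type*} [DecidableEq m] {c : ℝ} (hc : c ≠ 0) :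
    RowZeroSetsIncomparable (Matrix.of fun i j : m => if i = j then 0 else c) :=
  fun i j hij => ⟨i, by simp [hij.symm, hc]⟩

lemma rowZeroSetsIncomparable_offDiag_with_last {n : ℕ} (hn : 3 ≤ n) {c : ℝ} (hc : c ≠ 0) :
    RowZeroSetsIncomparable (Matrix.of fun i j : Fin n =>
      if i.val = n - 1 ∧ j.val = n - 1 then 1
      else if i.val = n - 1 ∨ j.val = n - 1 then 0
      else if i = j then 0 else c) := by
  intro i j hij
  have hij' : i.val ≠ j.val := Fin.val_ne_of_ne hij
  by_cases hj : j.val = n - 1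
  · exact ⟨j, by simp [hj]; omega⟩
  by_cases hi : i.val = n - 1
  · -- a column other than `j` and the last one
    refine ⟨⟨if j.val = 0 then 1 else 0, by split_ifs <;> omega⟩, ?_⟩
    have hl : (if j.val = 0 then 1 else 0) ≠ n - 1 := by split_ifs <;> omega
    have hjl : j ≠ ⟨if j.val = 0 then 1 else 0, by split_ifs <;> omega⟩ := by
      rw [Ne, Fin.ext_iff]; split_ifs <;> simp <;> omega
    simp [hi, hj, hl, hjl, hc]
  · exact ⟨i, by simp [hi, hj, hij.symm, hc]⟩

/-- for non-increasing strictly positive `d` on `n ≥ 4` points with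
`d_n < d_{n-1}`, and `M = M₀ ⊕ 1` with `M₀` the doubly stochastic matrix with
off-diagonal entries `1/(n-2)` and zero diagonal: any decomposition of `M` as a
product of `T^d`-transforms uses only transforms acting trivially on the last
level (every factor on a pair `(i, n)` has weight `0`); consequently `M` is in the
WETO polytope of `d` iff `M₀` is a product of `T`-transforms for the uniform
distribution on `n - 1` points. -/
theorem stmt13 (n : ℕ) (hn : 4 ≤ n) (d : Fin n → ℝ)
    (hpos : ∀ i, 0 < d i)
    (hmono : ∀ i j : Fin n, i ≤ j → d j ≤ d i)
    (hlast : d ⟨n - 1, by omega⟩ < d ⟨n - 2, by omega⟩) :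
    let M : Matrix (Fin n) (Fin n) ℝ := Matrix.of fun i j =>
      if i.val = n - 1 ∧ j.val = n - 1 then 1
      else if i.val = n - 1 ∨ j.val = n - 1 then 0
      else if i = j then 0 else 1 / ((n : ℝ) - 2)
    let M0 : Matrix (Fin (n - 1)) (Fin (n - 1)) ℝ := Matrix.of fun i j =>
      if i = j then 0 else 1 / ((n : ℝ) - 2)
    let u : Fin (n - 1) → ℝ := fun _ => 1 / ((n : ℝ) - 1)
    (∀ L : List (ℝ × Fin n × Fin n),
        (∀ t ∈ L, t.2.1 < t.2.2 ∧ t.1 ∈ Set.Icc (0 : ℝ) 1) →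
        M = (L.map fun t => Td d t.1 t.2.1 t.2.2).prod →
        ∀ t ∈ L, t.2.2.val = n - 1 → t.1 = 0) ∧
    ((∃ L : List (ℝ × Fin n × Fin n),
        (∀ t ∈ L, t.2.1 < t.2.2 ∧ t.1 ∈ Set.Icc (0 : ℝ) 1) ∧
        M = (L.map fun t => Td d t.1 t.2.1 t.2.2).prod) ↔
      (∃ L : List (ℝ × Fin (n - 1) × Fin (n - 1)),
        (∀ t ∈ L, t.2.1 < t.2.2 ∧ t.1 ∈ Set.Icc (0 : ℝ) 1) ∧
        M0 = (L.map fun t => Td u t.1 t.2.1 t.2.2).prod)) := by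
  intro M M0 u
  have hn' : (4 : ℝ) ≤ n := by exact_mod_cast hn
  have hc0 : 1 / ((n : ℝ) - 2) ≠ 0 := (one_div_pos.2 (by linarith)).ne'
  have hc1 : 1 / ((n : ℝ) - 2) ≠ 1 := by rw [Ne, div_eq_one_iff_eq] <;> linarith
  have hM : RowZeroSetsIncomparable M := rowZeroSetsIncomparable_offDiag_with_last (by omega) hc0
  have hadm_d : ∀ L : List (ℝ × Fin n × Fin n),
      (∀ t ∈ L, t.2.1 < t.2.2 ∧ t.1 ∈ Set.Icc (0 : ℝ) 1) →
      ∀ t ∈ L, TdAdmissible d t :=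
    fun L hL t ht =>
      tdAdmissible_of_antitone hpos (fun a b => hmono a b) (hL t ht).1 (hL t ht).2
  refine ⟨fun L hL hML t ht hj => ?_, iff_of_false ?_ ?_⟩
  · have hdj : d t.2.2 / d t.2.1 < 1 := by
      rw [div_lt_one (hpos _)]
      calc d t.2.2 = d ⟨n - 1, by omega⟩ := congrArg d (Fin.ext hj)
        _ < d ⟨n - 2, by omega⟩ := hlast
        _ ≤ d t.2.1 := hmono _ _ <|
            Fin.le_def.2 (show t.2.1.val ≤ n - 2 by have := Fin.lt_def.1 (hL t ht).1; omega)
    rcases trivial_or_swap_of_rowZeroSetsIncomparable d (hadm_d L hL) hM hML t ht with h | h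
    · exact h
    · exact absurd h.2 hdj.ne
  · rintro ⟨L, hL, hML⟩
    have h0 : ¬0 = n - 1 := by omega
    have h1 : ¬1 = n - 1 := by omega
    exact ne_tdProd_of_rowZeroSetsIncomparable d hM
      (k := ⟨0, by omega⟩) (l := ⟨1, by omega⟩)
      (by simpa [M, h0, h1] using hc0) (by simpa [M, h0, h1] using hc1) (hadm_d L hL) hML
  · rintro ⟨L, hL, hML⟩
    exact ne_tdProd_of_rowZeroSetsIncomparable u (rowZeroSetsIncomparable_offDiag hc0)
      (k := ⟨0, by omega⟩) (l := ⟨1, by omega⟩) (by simpa [M0] using hc0)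
      (by simpa [M0] using hc1)
      (fun t ht => tdAdmissible_const (one_div_pos.2 (by linarith)).ne' (hL t ht).1.ne (hL t ht).2)
      hML
end

section
/- Let d = (d₀, d₀, d₁) on {1,2,3} with 0 < d₁ < d₀ and γ = d₁/d₀. The set of 3×3 matrices expressible as a finite product of T^d-transforms is not convex: both P^d(1,2) and P^d(1,2)P^d(2,3)P^d(1,3) are finite products of T^d-transforms, but for every t ∈ (0,1) the convex combination (1-t)·P^d(1,2) + t·P^d(1,2)P^d(2,3)P^d(1,3) is not a finite product of T^d-transforms. -/
open Matrix BigOperators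

/-!
Matrices with nonnegative entries, unit column sums and `M *ᵥ d = d` form a convex monoid
containing every `P^d(i,j)` with `d j ≤ d i`, hence every `T^d`-transform and every product of
them. Let `C` be the convex combination and `C'` the same matrix with its first two rows
exchanged, `C' = P^d(1,2) C`. If `T P ∈ {C, C'}` for a transform `T ≠ I` and such a `P`, the
positive entries of `T` carry zeros of `C` or `C'` back into a row of `P`; for every transform
other than the swap `P^d(1,2)` itself these zeros contradict `(P d)_k = d_k` (the lighter third
coordinate cannot carry a row of weight `d₀` with entries at most `1`) or the entry `1 - t ≠ 0`.
So `P ∈ {C, C'}` again, and peeling off the factors of a product from the left ends at the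
identity, which is neither `C` nor `C'`. Indices are `0`-based: `Pswap d 0 1` is `P^d(1,2)`.
-/

section DStochastic

variable {n : Type*} [Fintype n] [DecidableEq n]

def dStochastic (d : n → ℝ) : Submonoid (Matrix n n ℝ) where
  carrier := {M | M ∈ colStochastic ℝ n ∧ M *ᵥ d = d}
  mul_mem' {M N} hM hN := ⟨mul_mem hM.1 hN.1, by rw [← mulVec_mulVec, hN.2, hM.2]⟩
  one_mem' := ⟨one_mem _, one_mulVec d⟩

lemma convex_dStochastic (d : n → ℝ) : Convex ℝ (dStochastic d : Set (Matrix n n ℝ)) := by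
  intro M hM N hN a b ha hb hab
  refine ⟨convex_colStochastic hM.1 hN.1 ha hb hab, ?_⟩
  rw [add_mulVec, smul_mulVec, smul_mulVec, hM.2, hN.2, ← add_smul, hab, one_smul]

end DStochastic

section Transforms

variable {m : ℕ} {d : Fin m → ℝ} {i j : Fin m}

lemma Pswap_mem_dStochastic (hij : i ≠ j) (hi : 0 < d i) (hj : 0 ≤ d j) (hji : d j ≤ d i) :
    Pswap d i j ∈ dStochastic d := by
  have hγ0 : 0 ≤ d j / d i := div_nonneg hj hi.le
  have hγ1 : d j / d i ≤ 1 := (div_le_one hi).2 hji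
  refine ⟨mem_colStochastic_iff_sum.2 ⟨fun k l => ?_, fun l => ?_⟩, funext fun k => ?_⟩
  · simp only [Pswap, of_apply]
    split_ifs <;> linarith
  · by_cases hli : l = i
    · subst hli
      rw [Fintype.sum_eq_add l j hij fun k hk => by simp [Pswap, hk.1, hk.2]]
      simp [Pswap, Ne.symm hij]
    by_cases hlj : l = j
    · subst hlj
      rw [Fintype.sum_eq_add i l hij fun k hk => by simp [Pswap, hk.1, hk.2]]
      simp [Pswap, Ne.symm hij]
    rw [Fintype.sum_eq_single l fun k hk => by simp [Pswap, hli, hlj, hk]]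
    simp [Pswap, hli, hlj]
  · simp only [mulVec, dotProduct]
    by_cases hki : k = i
    · subst hki
      rw [Fintype.sum_eq_add k j hij fun l hl => by simp [Pswap, hl.1, hl.2, Ne.symm hl.1]]
      simp [Pswap, Ne.symm hij]
      field_simp
      ring
    by_cases hkj : k = j
    · subst hkj
      rw [Fintype.sum_eq_add i k hij fun l hl => by simp [Pswap, hl.1, hl.2, hki, Ne.symm hl.2]]
      simp [Pswap, Ne.symm hij]
      field_simp
    rw [Fintype.sum_eq_single k fun l hl => by simp [Pswap, hki, hkj, Ne.symm hl]]
    simp [Pswap, hki, hkj]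

lemma Td_lam_zero : Td d 0 i j = 1 := by
  simp [Td]

lemma Td_lam_one : Td d 1 i j = Pswap d i j := by
  simp [Td]

lemma Td_mem_dStochastic {lam : ℝ} (hlam : lam ∈ Set.Icc (0 : ℝ) 1) (hij : i ≠ j) (hi : 0 < d i)
    (hj : 0 ≤ d j) (hji : d j ≤ d i) : Td d lam i j ∈ dStochastic d :=
  convex_dStochastic d (one_mem _) (Pswap_mem_dStochastic hij hi hj hji) (by linarith [hlam.2])
    hlam.1 (by ring)

lemma list_prod_Td_mem_dStochastic (hd : Antitone d) (hpos : ∀ k, 0 < d k)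
    (L : List (ℝ × Fin m × Fin m)) (hL : ∀ x ∈ L, x.2.1 < x.2.2 ∧ x.1 ∈ Set.Icc (0 : ℝ) 1) :
    (L.map fun x => Td d x.1 x.2.1 x.2.2).prod ∈ dStochastic d := by
  refine Submonoid.list_prod_mem _ fun M hM => ?_
  obtain ⟨x, hx, rfl⟩ := List.mem_map.1 hM
  obtain ⟨hlt, hlam⟩ := hL x hx
  exact Td_mem_dStochastic hlam hlt.ne (hpos _) (hpos _).le (hd hlt.le)

end Transforms

section ThreeByThree

variable {d0 d1 t lam : ℝ} {P : Matrix (Fin 3) (Fin 3) ℝ}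

lemma Pswap_zero_one (hd0 : d0 ≠ 0) :
    Pswap ![d0, d0, d1] 0 1 = !![0, 1, 0; 1, 0, 0; 0, 0, 1] := by
  ext k l
  fin_cases k <;> fin_cases l <;> simp [Pswap, hd0]

lemma Td_zero_one (hd0 : d0 ≠ 0) :
    Td ![d0, d0, d1] lam 0 1 = !![1 - lam, lam, 0; lam, 1 - lam, 0; 0, 0, 1] := by
  ext k l
  fin_cases k <;> fin_cases l <;> simp [Td, Pswap, hd0]

lemma Td_zero_two : Td ![d0, d0, d1] lam 0 2 =
    !![1 - lam * (d1 / d0), 0, lam; 0, 1, 0; lam * (d1 / d0), 0, 1 - lam] := by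
  ext k l
  fin_cases k <;> fin_cases l <;> simp [Td, Pswap]
  ring

lemma Td_one_two : Td ![d0, d0, d1] lam 1 2 =
    !![1, 0, 0; 0, 1 - lam * (d1 / d0), lam; 0, lam * (d1 / d0), 1 - lam] := by
  ext k l
  fin_cases k <;> fin_cases l <;> simp [Td, Pswap]
  ring

lemma antitone_vecCons_three (hle : d1 ≤ d0) : Antitone ![d0, d0, d1] := by
  intro a b hab
  fin_cases a <;> fin_cases b <;> simp_all [Fin.le_def]

lemma pos_vecCons_three (hd1 : 0 < d1) (hlt : d1 < d0) (k : Fin 3) : 0 < ![d0, d0, d1] k := by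
  fin_cases k <;> simp [hd1, hd1.trans hlt]

lemma dStochastic_row_eq (hP : P ∈ dStochastic ![d0, d0, d1]) (k : Fin 3) :
    P k 0 * d0 + P k 1 * d0 + P k 2 * d1 = ![d0, d0, d1] k := by
  simpa [mulVec, dotProduct, Fin.sum_univ_three] using congrFun hP.2 k

lemma notMem_dStochastic_of_row_eq_zero (hd1 : 0 ≤ d1) (hlt : d1 < d0) {k : Fin 3} (hk : k ≠ 2)
    (h0 : P k 0 = 0) (h1 : P k 1 = 0) : P ∉ dStochastic ![d0, d0, d1] := by
  intro hP
  have hrow : P k 2 * d1 = d0 := by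
    have := dStochastic_row_eq hP k
    fin_cases k <;> simp_all
  have hle : P k 2 ≤ 1 := le_one_of_mem_colStochastic hP.1
  nlinarith

lemma notMem_dStochastic_of_rows_eq_zero (hd0 : d0 ≠ 0) (h01 : P 0 1 = 0) (h02 : P 0 2 = 0)
    (h11 : P 1 1 = 0) (h12 : P 1 2 = 0) : P ∉ dStochastic ![d0, d0, d1] := by
  intro hP
  have h00 : P 0 0 = 1 := by
    have := dStochastic_row_eq hP 0
    simp_all
  have h10 : P 1 0 = 1 := by
    have := dStochastic_row_eq hP 1
    simp_all
  have hcol := sum_col_of_mem_colStochastic hP.1 0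
  rw [Fin.sum_univ_three, h00, h10] at hcol
  linarith [nonneg_of_mem_colStochastic hP.1 (i := 2) (j := 0)]

def combination (g t : ℝ) : Matrix (Fin 3) (Fin 3) ℝ :=
  !![t * g, 1 - t * g, 0; 1 - t * g, 0, t; 0, t * g, 1 - t]

def swappedCombination (g t : ℝ) : Matrix (Fin 3) (Fin 3) ℝ :=
  !![1 - t * g, 0, t; t * g, 1 - t * g, 0; 0, t * g, 1 - t]

lemma Pswap_zero_one_mul_combination (hd0 : d0 ≠ 0) (g : ℝ) :
    Pswap ![d0, d0, d1] 0 1 * combination g t = swappedCombination g t := by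
  rw [Pswap_zero_one hd0, combination, swappedCombination]
  ext k l
  fin_cases k <;> fin_cases l <;> simp [mul_apply, Fin.sum_univ_three]

lemma Pswap_zero_one_mul_swappedCombination (hd0 : d0 ≠ 0) (g : ℝ) :
    Pswap ![d0, d0, d1] 0 1 * swappedCombination g t = combination g t := by
  rw [Pswap_zero_one hd0, combination, swappedCombination]
  ext k l
  fin_cases k <;> fin_cases l <;> simp [mul_apply, Fin.sum_univ_three]

lemma Pswap_zero_one_mul_self (hd0 : d0 ≠ 0) :
    Pswap ![d0, d0, d1] 0 1 * Pswap ![d0, d0, d1] 0 1 = 1 := by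
  rw [Pswap_zero_one hd0]
  ext k l
  fin_cases k <;> fin_cases l <;> simp [mul_apply, Fin.sum_univ_three]

lemma mem_combinations_of_Td_zero_one_mul (hd0 : d0 ≠ 0) (hP : P ∈ dStochastic ![d0, d0, d1])
    (hlam0 : 0 < lam) (hlam1 : lam ≤ 1) {g : ℝ}
    (h : Td ![d0, d0, d1] lam 0 1 * P ∈ ({combination g t, swappedCombination g t} : Set _)) :
    P ∈ ({combination g t, swappedCombination g t} : Set _) := by
  rcases hlam1.lt_or_eq with hlam1 | rfl
  · exfalso
    have hrows : ∀ k l, k ≠ 2 → (Td ![d0, d0, d1] lam 0 1 * P) k l = 0 →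
        P 0 l = 0 ∧ P 1 l = 0 := by
      intro k l hk hkl
      have h0 := nonneg_of_mem_colStochastic hP.1 (i := 0) (j := l)
      have h1 := nonneg_of_mem_colStochastic hP.1 (i := 1) (j := l)
      rw [Td_zero_one hd0] at hkl
      fin_cases k <;> simp [mul_apply, Fin.sum_univ_three] at hkl hk <;>
        constructor <;> nlinarith
    rcases h with h | h <;> rw [h] at hrows
    · obtain ⟨h02, h12⟩ := hrows 0 2 (by decide) (by simp [combination])
      obtain ⟨h01, h11⟩ := hrows 1 1 (by decide) (by simp [combination])
      exact notMem_dStochastic_of_rows_eq_zero hd0 h01 h02 h11 h12 hP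
    · obtain ⟨h01, h11⟩ := hrows 0 1 (by decide) (by simp [swappedCombination])
      obtain ⟨h02, h12⟩ := hrows 1 2 (by decide) (by simp [swappedCombination])
      exact notMem_dStochastic_of_rows_eq_zero hd0 h01 h02 h11 h12 hP
  · rw [Td_lam_one] at h
    have hP' : P = Pswap ![d0, d0, d1] 0 1 * (Pswap ![d0, d0, d1] 0 1 * P) := by
      rw [← mul_assoc, Pswap_zero_one_mul_self hd0, one_mul]
    rcases h with h | h <;> rw [hP', h]
    · exact Or.inr (Pswap_zero_one_mul_combination hd0 g)
    · exact Or.inl (Pswap_zero_one_mul_swappedCombination hd0 g)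

lemma Td_zero_two_mul_notMem_combinations (hd1 : 0 < d1) (hlt : d1 < d0) (ht1 : t < 1)
    (hP : P ∈ dStochastic ![d0, d0, d1]) (hlam0 : 0 < lam) (hlam1 : lam ≤ 1) :
    Td ![d0, d0, d1] lam 0 2 * P ∉
      ({combination (d1 / d0) t, swappedCombination (d1 / d0) t} : Set _) := by
  have hg0 : 0 < d1 / d0 := div_pos hd1 (hd1.trans hlt)
  have hg1 : d1 / d0 < 1 := (div_lt_one (hd1.trans hlt)).2 hlt
  have hlamg : lam * (d1 / d0) < 1 := by nlinarith
  have hnn (k l : Fin 3) : 0 ≤ P k l := nonneg_of_mem_colStochastic hP.1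
  rw [Td_zero_two]
  rintro (h | h)
  · have e02 := congrFun₂ h 0 2
    have e22 := congrFun₂ h 2 2
    simp [combination, mul_apply, Fin.sum_univ_three] at e02 e22
    have h02 : P 0 2 = 0 := by nlinarith [hnn 0 2, hnn 2 2]
    have h22 : P 2 2 = 0 := by nlinarith [hnn 0 2, hnn 2 2]
    rw [h02, h22] at e22
    linarith
  · have e01 := congrFun₂ h 0 1
    have e20 := congrFun₂ h 2 0
    simp [swappedCombination, mul_apply, Fin.sum_univ_three] at e01 e20
    have h01 : P 0 1 = 0 := by nlinarith [hnn 0 1, hnn 2 1]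
    have h00 : P 0 0 = 0 := by nlinarith [hnn 0 0, hnn 2 0, mul_pos hlam0 hg0]
    exact notMem_dStochastic_of_row_eq_zero hd1.le hlt (k := 0) (by decide) h00 h01 hP

lemma Td_one_two_mul_notMem_combinations (hd1 : 0 < d1) (hlt : d1 < d0) (ht1 : t < 1)
    (hP : P ∈ dStochastic ![d0, d0, d1]) (hlam0 : 0 < lam) (hlam1 : lam ≤ 1) :
    Td ![d0, d0, d1] lam 1 2 * P ∉
      ({combination (d1 / d0) t, swappedCombination (d1 / d0) t} : Set _) := by
  have hg0 : 0 < d1 / d0 := div_pos hd1 (hd1.trans hlt)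
  have hg1 : d1 / d0 < 1 := (div_lt_one (hd1.trans hlt)).2 hlt
  have hlamg : lam * (d1 / d0) < 1 := by nlinarith
  have hnn (k l : Fin 3) : 0 ≤ P k l := nonneg_of_mem_colStochastic hP.1
  rw [Td_one_two]
  rintro (h | h)
  · have e11 := congrFun₂ h 1 1
    have e20 := congrFun₂ h 2 0
    simp [combination, mul_apply, Fin.sum_univ_three] at e11 e20
    have h11 : P 1 1 = 0 := by nlinarith [hnn 1 1, hnn 2 1]
    have h10 : P 1 0 = 0 := by nlinarith [hnn 1 0, hnn 2 0, mul_pos hlam0 hg0]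
    exact notMem_dStochastic_of_row_eq_zero hd1.le hlt (k := 1) (by decide) h10 h11 hP
  · have e12 := congrFun₂ h 1 2
    have e22 := congrFun₂ h 2 2
    simp [swappedCombination, mul_apply, Fin.sum_univ_three] at e12 e22
    have h12 : P 1 2 = 0 := by nlinarith [hnn 1 2, hnn 2 2]
    have h22 : P 2 2 = 0 := by nlinarith [hnn 1 2, hnn 2 2]
    rw [h12, h22] at e22
    linarith

lemma mem_combinations_of_Td_mul (hd1 : 0 < d1) (hlt : d1 < d0) (ht1 : t < 1)
    (hP : P ∈ dStochastic ![d0, d0, d1]) (hlam : lam ∈ Set.Icc (0 : ℝ) 1) {i j : Fin 3}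
    (hij : i < j)
    (h : Td ![d0, d0, d1] lam i j * P ∈
      ({combination (d1 / d0) t, swappedCombination (d1 / d0) t} : Set _)) :
    P ∈ ({combination (d1 / d0) t, swappedCombination (d1 / d0) t} : Set _) := by
  rcases hlam.1.eq_or_lt with rfl | hlam0
  · rwa [Td_lam_zero, one_mul] at h
  fin_cases i <;> fin_cases j <;> simp at hij
  · exact mem_combinations_of_Td_zero_one_mul (hd1.trans hlt).ne' hP hlam0 hlam.2 h
  · exact absurd h (Td_zero_two_mul_notMem_combinations hd1 hlt ht1 hP hlam0 hlam.2)
  · exact absurd h (Td_one_two_mul_notMem_combinations hd1 hlt ht1 hP hlam0 hlam.2)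

lemma list_prod_Td_notMem_combinations (hd1 : 0 < d1) (hlt : d1 < d0) (ht0 : 0 < t)
    (ht1 : t < 1) (L : List (ℝ × Fin 3 × Fin 3))
    (hL : ∀ x ∈ L, x.2.1 < x.2.2 ∧ x.1 ∈ Set.Icc (0 : ℝ) 1) :
    (L.map fun x => Td ![d0, d0, d1] x.1 x.2.1 x.2.2).prod ∉
      ({combination (d1 / d0) t, swappedCombination (d1 / d0) t} : Set _) := by
  induction L with
  | nil =>
    have htg : 0 < t * (d1 / d0) := mul_pos ht0 (div_pos hd1 (hd1.trans hlt))
    rintro (h | h)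
    · simpa [combination] using congrFun₂ h 1 1
    · have := congrFun₂ h 1 1
      simp [swappedCombination] at this
      linarith
  | cons x L ih =>
    obtain ⟨hx, hxlam⟩ := hL x List.mem_cons_self
    have hL' := fun y hy => hL y (List.mem_cons_of_mem x hy)
    have hP := list_prod_Td_mem_dStochastic (antitone_vecCons_three hlt.le)
      (pos_vecCons_three hd1 hlt) L hL'
    rw [List.map_cons, List.prod_cons]
    exact fun h => ih hL' (mem_combinations_of_Td_mul hd1 hlt ht1 hP hxlam hx h)

lemma one_sub_smul_add_smul_eq_combination (hd0 : d0 ≠ 0) :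
    (1 - t) • Pswap ![d0, d0, d1] 0 1 +
      t • (Pswap ![d0, d0, d1] 0 1 * Pswap ![d0, d0, d1] 1 2 * Pswap ![d0, d0, d1] 0 2) =
    combination (d1 / d0) t := by
  ext k l
  fin_cases k <;> fin_cases l <;>
    simp [Pswap, combination, mul_apply, Fin.sum_univ_three, hd0] <;> ring

end ThreeByThree

theorem stmt15_general (d0 d1 : ℝ) (h1 : 0 < d1) (h10 : d1 < d0) :
    let d : Fin 3 → ℝ := ![d0, d0, d1]
    let IsWETO : Matrix (Fin 3) (Fin 3) ℝ → Prop := fun M =>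
      ∃ L : List (ℝ × Fin 3 × Fin 3),
        (∀ t ∈ L, t.2.1 < t.2.2 ∧ t.1 ∈ Set.Icc (0 : ℝ) 1) ∧
        M = (L.map fun t => Td d t.1 t.2.1 t.2.2).prod
    IsWETO (Pswap d 0 1) ∧
    IsWETO (Pswap d 0 1 * Pswap d 1 2 * Pswap d 0 2) ∧
    ∀ t : ℝ, 0 < t → t < 1 →
      ¬ IsWETO ((1 - t) • Pswap d 0 1 +
          t • (Pswap d 0 1 * Pswap d 1 2 * Pswap d 0 2)) := by
  intro d IsWETO
  refine ⟨⟨[(1, 0, 1)], by simp, by simp [Td_lam_one]⟩,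
    ⟨[(1, 0, 1), (1, 1, 2), (1, 0, 2)], by simp, by simp [Td_lam_one, mul_assoc]⟩, ?_⟩
  rintro t ht0 ht1 ⟨L, hL, hM⟩
  rw [one_sub_smul_add_smul_eq_combination (h1.trans h10).ne'] at hM
  exact list_prod_Td_notMem_combinations h1 h10 ht0 ht1 L hL (Or.inl hM.symm)

/-- for `d = (d₀, d₀, d₁)` with `0 < d₁ < d₀`, the set of finite
products of `T^d`-transforms is not convex: `P^d(1,2)` and
`P^d(1,2)·P^d(2,3)·P^d(1,3)` are such products, but no strict convex combination
of the two is. -/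
theorem stmt15 (d0 d1 : ℝ) (h1 : 0 < d1) (h10 : d1 < d0) (hsum : 2 * d0 + d1 = 1) :
    let d : Fin 3 → ℝ := ![d0, d0, d1]
    let IsWETO : Matrix (Fin 3) (Fin 3) ℝ → Prop := fun M =>
      ∃ L : List (ℝ × Fin 3 × Fin 3),
        (∀ t ∈ L, t.2.1 < t.2.2 ∧ t.1 ∈ Set.Icc (0 : ℝ) 1) ∧
        M = (L.map fun t => Td d t.1 t.2.1 t.2.2).prod
    IsWETO (Pswap d 0 1) ∧
    IsWETO (Pswap d 0 1 * Pswap d 1 2 * Pswap d 0 2) ∧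
    ∀ t : ℝ, 0 < t → t < 1 →
      ¬ IsWETO ((1 - t) • Pswap d 0 1 +
          t • (Pswap d 0 1 * Pswap d 1 2 * Pswap d 0 2)) :=
  stmt15_general d0 d1 h1 h10
end

section
/- Let d be a strictly positive probability distribution on {1,...,n} with non-increasing components, and let u_1, ..., u_q < n be pairwise distinct indices. Then the product N = P^d(u_q, n) ⋯ P^d(u_2, n) · P^d(u_1, n) satisfies: row u_1 of N has a 1 in column n and the value 1 - d_n/d_{u_1} in column u_1; for 1 < k ≤ q, row u_k has the value d_n/d_{u_{k-1}} in column u_{k-1} and the value 1 - d_n/d_{u_k} in column u_k; row n has the value d_n/d_{u_q} in column u_q; and all other entries of these rows are zero. -/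
/-!
Left multiplication by `P^d(i, j)` replaces row `i` by `(1 - d j / d i) • row i + row j` and
row `j` by `(d j / d i) • row i`, leaving all other rows alone. Since the `u k` are distinct,
row `u k` is still the unit row `e (u k)` when `P^d(u k, j)` acts, so from then on it stays
`(1 - d j / d (u k)) • e (u k) + (row j before that step)`, while row `j` becomes
`(d j / d (u k)) • e (u k)`.
-/

open Matrix BigOperators

section
variable {n : ℕ} (d : Fin n → ℝ) {i j : Fin n}

lemma Pswap_row_left (hij : i ≠ j) :
    Pswap d i j i = (1 - d j / d i) • Pi.single i 1 + Pi.single j 1 := by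
  ext l
  by_cases hl : l = i <;> by_cases hl' : l = j <;>
    simp_all [Pswap, Pi.single_apply, Ne.symm hij, eq_comm]

lemma Pswap_row_right (hij : i ≠ j) : Pswap d i j j = (d j / d i) • Pi.single i 1 := by
  ext l
  by_cases hl : l = i <;> by_cases hl' : l = j <;>
    simp_all [Pswap, Pi.single_apply, Ne.symm hij, eq_comm]

lemma Pswap_row_of_ne {r : Fin n} (hri : r ≠ i) (hrj : r ≠ j) :
    Pswap d i j r = Pi.single r 1 := by
  ext l
  by_cases hl : l = r <;> simp_all [Pswap, eq_comm]

lemma Pswap_mul_row_left (hij : i ≠ j) (M : Matrix (Fin n) (Fin n) ℝ) :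
    (Pswap d i j * M) i = (1 - d j / d i) • M i + M j := by
  rw [mul_apply_eq_vecMul, Pswap_row_left d hij, add_vecMul, smul_vecMul, single_one_vecMul,
    single_one_vecMul]
  rfl

lemma Pswap_mul_row_right (hij : i ≠ j) (M : Matrix (Fin n) (Fin n) ℝ) :
    (Pswap d i j * M) j = (d j / d i) • M i := by
  rw [mul_apply_eq_vecMul, Pswap_row_right d hij, smul_vecMul, single_one_vecMul]
  rfl

lemma Pswap_mul_row_of_ne {r : Fin n} (hri : r ≠ i) (hrj : r ≠ j)
    (M : Matrix (Fin n) (Fin n) ℝ) :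
    (Pswap d i j * M) r = M r := by
  rw [mul_apply_eq_vecMul, Pswap_row_of_ne d hri hrj, single_one_vecMul]
  rfl

end

section
variable {n q : ℕ} (d : Fin n → ℝ) (j : Fin n)

noncomputable def pswapChain (u : Fin q → Fin n) : Matrix (Fin n) (Fin n) ℝ :=
  ((List.ofFn fun k : Fin q => Pswap d (u k) j).reverse).prod

/-- Row `j` of `pswapChain d j u` once only the first `k` swaps have acted. -/
noncomputable def pswapChainRow (u : Fin q → Fin n) (k : Fin (q + 1)) : Fin n → ℝ :=
  Fin.cases (Pi.single j 1) (fun k => (d j / d (u k)) • Pi.single (u k) 1) k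

@[simp]
lemma pswapChainRow_succ (u : Fin q → Fin n) (k : Fin q) :
    pswapChainRow d j u k.succ = (d j / d (u k)) • Pi.single (u k) 1 := rfl

lemma pswapChainRow_init (u : Fin (q + 1) → Fin n) (k : Fin (q + 1)) :
    pswapChainRow d j (Fin.init u) k = pswapChainRow d j u k.castSucc := by
  cases k using Fin.cases with
  | zero => rfl
  | succ k => simp [Fin.init]

lemma pswapChain_snoc (u : Fin (q + 1) → Fin n) :
    pswapChain d j u = Pswap d (u (Fin.last q)) j * pswapChain d j (Fin.init u) := by
  rw [pswapChain, List.ofFn_succ', List.concat_eq_append, List.reverse_concat', List.prod_cons]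
  rfl

theorem pswapChain_rows (u : Fin q → Fin n) (hinj : Function.Injective u)
    (hj : ∀ k, u k ≠ j) :
    pswapChain d j u j = pswapChainRow d j u (Fin.last q) ∧
    (∀ k, pswapChain d j u (u k) =
      (1 - d j / d (u k)) • Pi.single (u k) 1 + pswapChainRow d j u k.castSucc) ∧
    ∀ r, r ≠ j → (∀ k, r ≠ u k) → pswapChain d j u r = Pi.single r 1 := by
  induction q with
  | zero =>
    have h_one (r : Fin n) : pswapChain d j u r = Pi.single r 1 :=
      funext fun _ => one_eq_pi_single
    exact ⟨h_one j, fun k => k.elim0, fun r _ _ => h_one r⟩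
  | succ q ih =>
    obtain ⟨ih_j, ih_u, ih_other⟩ :=
      ih (Fin.init u) (hinj.comp (Fin.castSucc_injective q)) fun k => hj _
    have h_last : pswapChain d j (Fin.init u) (u (Fin.last q)) = Pi.single (u (Fin.last q)) 1 :=
      ih_other _ (hj _) fun k h => (Fin.castSucc_lt_last k).ne (hinj h).symm
    refine ⟨?_, fun k => ?_, fun r hrj hru => ?_⟩
    · rw [pswapChain_snoc, Pswap_mul_row_right d (hj _), h_last, ← Fin.succ_last]
      rfl
    · cases k using Fin.lastCases with
      | last =>
        rw [pswapChain_snoc, Pswap_mul_row_left d (hj _), h_last, ih_j, pswapChainRow_init]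
      | cast k =>
        have hne : u k.castSucc ≠ u (Fin.last q) := fun h => (Fin.castSucc_lt_last k).ne (hinj h)
        rw [pswapChain_snoc, Pswap_mul_row_of_ne d hne (hj _), ← pswapChainRow_init]
        exact ih_u k
    · rw [pswapChain_snoc, Pswap_mul_row_of_ne d (hru _) hrj]
      exact ih_other r hrj fun k => hru _

end

/-- structure of the rows of the product
`N = P^d(u_q, n) ⋯ P^d(u_1, n)` of `d`-swaps with the last level, for pairwise
distinct indices `u_1, …, u_q < n` (here 0-indexed, with `u 0` acting first). -/
theorem stmt17 (n q : ℕ) (hn : 2 ≤ n) (hq : 1 ≤ q) (d : Fin n → ℝ)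
    (u : Fin q → Fin n) (hinj : Function.Injective u)
    (hu : ∀ k, (u k).val < n - 1) :
    let lastI : Fin n := ⟨n - 1, by omega⟩
    let N : Matrix (Fin n) (Fin n) ℝ :=
      ((List.ofFn fun k : Fin q => Pswap d (u k) lastI).reverse).prod
    (N (u ⟨0, hq⟩) lastI = 1) ∧
    (N (u ⟨0, hq⟩) (u ⟨0, hq⟩) = 1 - d lastI / d (u ⟨0, hq⟩)) ∧
    (∀ l, l ≠ lastI → l ≠ u ⟨0, hq⟩ → N (u ⟨0, hq⟩) l = 0) ∧
    (∀ k : Fin q, 0 < k.val →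
      N (u k) (u ⟨k.val - 1, lt_of_le_of_lt (Nat.sub_le _ _) k.isLt⟩) =
          d lastI / d (u ⟨k.val - 1, lt_of_le_of_lt (Nat.sub_le _ _) k.isLt⟩) ∧
      N (u k) (u k) = 1 - d lastI / d (u k) ∧
      ∀ l, l ≠ u k → l ≠ u ⟨k.val - 1, lt_of_le_of_lt (Nat.sub_le _ _) k.isLt⟩ →
        N (u k) l = 0) ∧
    (N lastI (u ⟨q - 1, by omega⟩) = d lastI / d (u ⟨q - 1, by omega⟩)) ∧
    (∀ l, l ≠ u ⟨q - 1, by omega⟩ → N lastI l = 0) ∧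
    (∀ r : Fin n, r ≠ lastI → (∀ k, r ≠ u k) →
      ∀ l, N r l = if r = l then 1 else 0) := by
  intro lastI N
  have hne (k : Fin q) : u k ≠ lastI := fun h => (hu k).ne (congrArg Fin.val h)
  obtain ⟨row_j, row_u, row_other⟩ := pswapChain_rows d lastI u hinj hne
  have row_first : N (u ⟨0, hq⟩) =
      (1 - d lastI / d (u ⟨0, hq⟩)) • Pi.single (u ⟨0, hq⟩) 1 + Pi.single lastI 1 :=
    row_u _
  have row_last : N lastI =
      (d lastI / d (u ⟨q - 1, by omega⟩)) • Pi.single (u ⟨q - 1, by omega⟩) 1 := by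
    rw [← pswapChainRow_succ]
    exact row_j.trans (congrArg _ (Fin.ext (by simp; omega)))
  refine ⟨?_, ?_, fun l hl hl0 => ?_, fun k hk => ?_, ?_, fun l hl => ?_,
    fun r hr hru l => ?_⟩
  · simp [row_first, hne]
  · simp [row_first, hne]
  · simp [row_first, hl, hl0]
  · have hprev : (⟨k.val - 1, by omega⟩ : Fin q) ≠ k := Fin.ne_of_val_ne (by simp; omega)
    have row_k : N (u k) = (1 - d lastI / d (u k)) • Pi.single (u k) 1 +
        (d lastI / d (u ⟨k.val - 1, by omega⟩)) •
          Pi.single (u ⟨k.val - 1, by omega⟩) 1 := by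
      rw [← pswapChainRow_succ]
      exact (row_u k).trans (congrArg _ (congrArg _ (Fin.ext (by simp; omega))))
    refine ⟨?_, ?_, fun l hl hl' => ?_⟩
    · simp [row_k, hinj.ne hprev]
    · simp [row_k, (hinj.ne hprev).symm]
    · simp [row_k, hl, hl']
  · simp [row_last]
  · simp [row_last, hl]
  · simp [show N r = _ from row_other r hr hru, Pi.single_apply, eq_comm]
end

section
/- Let d = (d₀,...,d₀,d₁) on {1,...,n} with 0 < d₁ ≤ d₀ and γ = d₁/d₀. Let p be a probability distribution with p₁ ≥ p₂ ≥ ... ≥ p_{n-1}, and suppose the d-order of p places index n in position m (i.e., γp_{m-1} ≥ p_n ≥ γp_m with appropriate conventions). For a permutation Π with s := Π(n) > m, the extreme point p^Π of the thermal cone of p, given by p^Π = (p₁,...,p_{m-1}, (1-γ)p_m + p_n, (1-γ)p_{m+1} + γp_m, ..., (1-γ)p_{s-1} + γp_{s-2}, p_s, ..., p_{n-1}, γp_{s-1}), satisfies p^Π = (Π_{k=m}^{s-1} P^d(k, n)) p, i.e., it is reachable from p by applying at most n d-swaps. -/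
open Matrix BigOperators

lemma sum_two {n : ℕ} {f : Fin n → ℝ} (i j : Fin n) (hij : i ≠ j)
    (h : ∀ k, k ≠ i → k ≠ j → f k = 0) : ∑ k, f k = f i + f j := by
  have h1 : ∑ k, f k = ∑ k ∈ ({i, j} : Finset (Fin n)), f k := by
    refine (Finset.sum_subset (Finset.subset_univ _) ?_).symm
    intro x _ hx
    simp only [Finset.mem_insert, Finset.mem_singleton, not_or] at hx
    exact h x hx.1 hx.2
  rw [h1, Finset.sum_pair hij]

lemma Pswap_mulVec {n : ℕ} (d : Fin n → ℝ) (i j : Fin n) (hij : i ≠ j) (v : Fin n → ℝ) :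
    (Pswap d i j).mulVec v = fun k =>
      if k = i then (1 - d j / d i) * v i + v j
      else if k = j then d j / d i * v i
      else v k := by
  funext k
  simp only [Matrix.mulVec, dotProduct, Pswap, Matrix.of_apply]
  rcases eq_or_ne k i with rfl | hki
  · simp only [if_pos rfl]
    rw [sum_two k j hij]
    · simp [hij, Ne.symm hij]
    · intro l hl1 hl2
      simp [hl1, hl2, Ne.symm hl1]
  · rcases eq_or_ne k j with rfl | hkj
    · simp only [if_neg hki, if_pos rfl]
      rw [Fintype.sum_eq_single i]
      · simp [hki, Ne.symm hij]
      · intro l hl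
        rcases eq_or_ne l k with rfl | h
        · simp [hki, hl]
        · simp [hki, hl, h, Ne.symm h]
    · simp only [if_neg hki, if_neg hkj]
      rw [Fintype.sum_eq_single k]
      · simp [hki, hkj]
      · intro l hl
        simp [hki, hkj, hl, Ne.symm hl]

lemma reverse_prod_mulVec {n : ℕ} (L : List (Matrix (Fin n) (Fin n) ℝ)) (v : Fin n → ℝ) :
    (L.reverse.prod).mulVec v = L.foldl (fun w A => A.mulVec w) v := by
  induction L generalizing v with
  | nil => simp [Matrix.mulVec_one]
  | cons x xs ih =>
      simp only [List.reverse_cons, List.prod_append, List.prod_cons, List.prod_nil, mul_one,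
        List.foldl_cons]
      rw [← Matrix.mulVec_mulVec, ih]

/-- The target vector. -/
noncomputable def tgt (n m s : ℕ) (hs2 : s - 2 < n) (γ : ℝ) (lastI : Fin n) (p : Fin n → ℝ) :
    Fin n → ℝ := fun i =>
  if i.val + 1 < m then p i
  else if i.val + 1 = m then (1 - γ) * p i + p lastI
  else if i.val + 1 < s then
    (1 - γ) * p i + γ * p ⟨i.val - 1, lt_of_le_of_lt (Nat.sub_le _ _) i.isLt⟩
  else if i.val < n - 1 then p i
  else γ * p ⟨s - 2, hs2⟩

lemma iter (n m : ℕ) (hn : 3 ≤ n) (hm : 1 ≤ m) (γ : ℝ)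
    (lastI : Fin n) (hlI : lastI.val = n - 1)
    (d : Fin n → ℝ) (hd : ∀ i : Fin n, i ≠ lastI → d lastI / d i = γ)
    (p : Fin n → ℝ) :
    ∀ c : ℕ, ∀ _hc : 1 ≤ c, ∀ hcn : m + c ≤ n - 1,
    (List.ofFn fun t : Fin c =>
        Pswap d ⟨m - 1 + t.val, by have := t.isLt; omega⟩ lastI).foldl
        (fun w A => A.mulVec w) p
      = tgt n m (m + c) (by omega) γ lastI p := by
  intro c
  induction c with
  | zero => omega
  | succ c ih =>
    intro _ hcn
    have hne : (⟨m - 1 + c, by omega⟩ : Fin n) ≠ lastI := by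
      intro h
      have := congrArg Fin.val h
      simp [hlI] at this
      omega
    rcases Nat.eq_zero_or_pos c with rfl | hc
    · -- base case: one swap
      simp only [List.ofFn_succ, List.ofFn_zero, List.foldl_cons, List.foldl_nil, Fin.val_zero]
      rw [Pswap_mulVec d _ lastI hne p, hd _ hne]
      funext k
      simp only [tgt]
      rcases eq_or_ne k (⟨m - 1 + 0, by omega⟩ : Fin n) with rfl | hk1
      · simp only [if_pos rfl]
        have h1 : ¬ ((m - 1 + 0) + 1 < m) := by omega
        have h2 : (m - 1 + 0) + 1 = m := by omega
        simp only [if_neg h1, if_pos h2, if_true, ite_true, eq_self_iff_true]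
      · rcases eq_or_ne k lastI with rfl | hk2
        · have h1 : ¬ (k.val + 1 < m) := by omega
          have h2 : ¬ (k.val + 1 = m) := by omega
          have h3 : ¬ (k.val + 1 < m + 1) := by omega
          have h4 : ¬ (k.val < n - 1) := by omega
          simp only [if_neg hk1, if_pos rfl, if_neg h1, if_neg h2, if_neg h3, if_neg h4]
          rw [if_pos trivial]
          congr 2
          all_goals simp only [Fin.mk.injEq]
          all_goals omega
        · have hkv : k.val ≠ m - 1 := fun h => hk1 (Fin.ext (by simpa using h))
          have hkl : k.val ≠ n - 1 := fun h => hk2 (Fin.ext (by rw [hlI]; exact h))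
          have hkn : k.val < n - 1 := by have := k.isLt; omega
          simp only [if_neg hk1, if_neg hk2]
          have h2 : ¬ (k.val + 1 = m) := by omega
          rcases lt_or_ge (k.val + 1) m with h | h
          · simp only [if_pos h]
          · have h3 : ¬ (k.val + 1 < m) := by omega
            have h4 : ¬ (k.val + 1 < m + 1) := by omega
            simp only [if_neg h3, if_neg h2, if_neg h4, if_pos hkn]
    · -- inductive step
      rw [List.ofFn_succ']
      simp only [List.concat_eq_append, List.foldl_append, List.foldl_cons, List.foldl_nil,
        Fin.coe_castSucc, Fin.val_last]
      rw [ih hc (by omega)]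
      rw [Pswap_mulVec d _ lastI hne _, hd _ hne]
      funext k
      simp only [tgt]
      rcases eq_or_ne k (⟨m - 1 + c, by omega⟩ : Fin n) with rfl | hk1
      · -- index m-1+c
        have h1 : ¬ ((m - 1 + c) + 1 < m) := by omega
        have h2 : ¬ ((m - 1 + c) + 1 = m) := by omega
        have h3 : ¬ ((m - 1 + c) + 1 < m + c) := by omega
        have h4 : (m - 1 + c : ℕ) < n - 1 := by omega
        have h5 : ((m - 1 + c) + 1) < m + (c + 1) := by omega
        simp only [if_pos rfl, if_neg h1, if_neg h2, if_neg h3, if_pos h4, if_pos h5]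
        have hl1 : ¬ (lastI.val + 1 < m) := by omega
        have hl2 : ¬ (lastI.val + 1 = m) := by omega
        have hl3 : ¬ (lastI.val + 1 < m + c) := by omega
        have hl4 : ¬ (lastI.val < n - 1) := by omega
        simp only [if_neg hl1, if_neg hl2, if_neg hl3, if_neg hl4]
        simp only [if_true, ite_true, eq_self_iff_true]
        congr 3
        all_goals simp only [Fin.mk.injEq]
        all_goals omega
      · rcases eq_or_ne k lastI with rfl | hk2
        · have hl1 : ¬ (k.val + 1 < m) := by omega
          have hl2 : ¬ (k.val + 1 = m) := by omega
          have hl3 : ¬ (k.val + 1 < m + (c + 1)) := by omega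
          have hl4 : ¬ (k.val < n - 1) := by omega
          simp only [if_neg hk1, if_pos rfl, if_neg hl1, if_neg hl2, if_neg hl3, if_neg hl4]
          have h1 : ¬ ((m - 1 + c) + 1 < m) := by omega
          have h2 : ¬ ((m - 1 + c) + 1 = m) := by omega
          have h3 : ¬ ((m - 1 + c) + 1 < m + c) := by omega
          have h4 : (m - 1 + c : ℕ) < n - 1 := by omega
          simp only [if_neg h1, if_neg h2, if_neg h3, if_pos h4]
          rw [if_pos trivial]
          congr 2
          all_goals simp only [Fin.mk.injEq]
          all_goals omega
        · simp only [if_neg hk1, if_neg hk2]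
          have hkv : k.val ≠ m - 1 + c := fun h => hk1 (Fin.ext (by simpa using h))
          have hkl : k.val ≠ n - 1 := fun h => hk2 (Fin.ext (by rw [hlI]; exact h))
          have hkn : k.val < n - 1 := by have := k.isLt; omega
          rcases lt_or_ge (k.val + 1) m with h | h
          · simp only [if_pos h]
          · have h3 : ¬ (k.val + 1 < m) := by omega
            rcases eq_or_ne (k.val + 1) m with h2 | h2
            · simp only [if_neg h3, if_pos h2]
            · rcases lt_or_ge (k.val + 1) (m + c) with h4 | h4
              · have h5 : k.val + 1 < m + (c + 1) := by omega
                simp only [if_neg h3, if_neg h2, if_pos h4, if_pos h5]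
              · have h5 : ¬ (k.val + 1 < m + c) := by omega
                have h6 : ¬ (k.val + 1 < m + (c + 1)) := by omega
                simp only [if_neg h3, if_neg h2, if_neg h5, if_neg h6, if_pos hkn]

/-- for `d = (d₀,…,d₀,d₁)` (`0 < d₁ ≤ d₀`, `γ = d₁/d₀`) and a
probability distribution `p` with non-increasing first `n-1` components whose
`d`-order places the last index in position `m` (`γ p_{m-1} ≥ p_n ≥ γ p_m`,
1-indexed), the extreme point `p^Π` of the thermal cone associated with a
permutation `Π` with `s = Π(n) > m`, namely
`p^Π = (p₁,…,p_{m-1}, (1-γ)p_m + p_n, (1-γ)p_{m+1} + γ p_m, …,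
(1-γ)p_{s-1} + γ p_{s-2}, p_s, …, p_{n-1}, γ p_{s-1})`,
is reached from `p` by the product of `d`-swaps `Π_{k=m}^{s-1} P^d(k, n)`
(with `P^d(m,n)` acting first). -/
theorem stmt18 (n m s : ℕ) (hn : 3 ≤ n) (hm : 1 ≤ m) (hms : m < s) (hs : s ≤ n - 1)
    (d0 d1 : ℝ) (h1 : 0 < d1) (h10 : d1 ≤ d0)
    (hsum : ((n : ℝ) - 1) * d0 + d1 = 1) :
    let γ : ℝ := d1 / d0
    let lastI : Fin n := ⟨n - 1, by omega⟩
    let d : Fin n → ℝ := fun i => if i = lastI then d1 else d0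
    ∀ p : Fin n → ℝ, (∀ i, 0 ≤ p i) → ∑ i, p i = 1 →
      (∀ i j : Fin n, i ≤ j → j.val < n - 1 → p j ≤ p i) →
      (1 < m → p lastI ≤ γ * p ⟨m - 2, by omega⟩) →
      γ * p ⟨m - 1, by omega⟩ ≤ p lastI →
      (fun i : Fin n =>
          if i.val + 1 < m then p i
          else if i.val + 1 = m then (1 - γ) * p i + p lastI
          else if i.val + 1 < s then
            (1 - γ) * p i + γ * p ⟨i.val - 1, lt_of_le_of_lt (Nat.sub_le _ _) i.isLt⟩
          else if i.val < n - 1 then p i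
          else γ * p ⟨s - 2, by omega⟩) =
        (((List.ofFn fun t : Fin (s - m) =>
            Pswap d ⟨m - 1 + t.val, by have := t.isLt; omega⟩ lastI).reverse).prod).mulVec p := by
  intro γ lastI d p _hp _hps _hmono _hA _hB
  obtain ⟨c, rfl⟩ := Nat.exists_eq_add_of_lt hms
  have hd : ∀ i : Fin n, i ≠ lastI → d lastI / d i = γ := by
    intro i hi
    show (if lastI = lastI then d1 else d0) / (if i = lastI then d1 else d0) = d1 / d0
    rw [if_pos rfl, if_neg hi]
  rw [reverse_prod_mulVec]
  have hc : m + c + 1 - m = c + 1 := by omega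
  have key := iter n m hn hm γ lastI rfl d hd p (c + 1) (by omega) (by omega)
  rw [List.ofFn_congr hc (fun t : Fin (m + c + 1 - m) =>
    Pswap d ⟨m - 1 + t.val, by have := t.isLt; omega⟩ lastI)]
  exact key.symm
end
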